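/- arXiv:1107.3215 — 7 statements merged into one kernel-verified Lean document; each statement's English description precedes it below -/
import Mathlib

section
/- Let ε ∈ (0,2), g : ℕ → ℕ, M a positive integer, θ : ℤ₊ → ℤ₊ a rate of divergence of ∑ α_n (i.e. ∑_{k=1}^{θ(n)} α_k ≥ n for all n ≥ 1) where (α_n) is a sequence in [0,1], and ψ : (0,∞) → ℤ₊. Define Θ = θ(ψ(ε/3) − 1 + ⌈ln(3M/ε)⌉) + 1 and Δ = ε / (3·g_ε(Θ − ψ(ε/3))) where g_ε(n) = n + g(n + ψ(ε/3)). Suppose (t_n) satisfies t_n ≤ ε/3 for all n ≥ ψ(ε/3), and (s_n) is a sequence with 0 ≤ s_n ≤ M satisfying s_{n+1} ≤ (1 − α_n)·s_n + α_n·t_n + Δ for all n ≥ 1. Then s_n ≤ ε for all n ∈ [Θ, Θ + g(Θ)]. -/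
/-!
From the index `p = ψ(ε/3)` on, unrolling the recursion gives
`s n ≤ s p · ∏_{p ≤ k < n} (1 - α k) + ε/3 + (n - p)·Δ`.
Since `1 - x ≤ exp (-x)`, the product is at most `exp (-∑_{p ≤ k < n} α k)`, and the rate of
divergence makes this sum at least `⌈ln (3M/ε)⌉` once `n ≥ Θ`; so the first term is at most `ε/3`.
For `n ≤ Θ + g Θ` the number of steps `n - p` is at most `(Θ - p) + g Θ = ε / (3Δ)`, so the
accumulated error `(n - p)·Δ` is at most `ε/3` as well.
-/

open Finset Real

lemma prod_one_sub_le_exp_neg_sum {ι : Type*} {S : Finset ι} {α : ι → ℝ}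
    (hα : ∀ k ∈ S, α k ≤ 1) : ∏ k ∈ S, (1 - α k) ≤ exp (-∑ k ∈ S, α k) := by
  rw [← sum_neg_distrib, exp_sum]
  exact prod_le_prod (fun k hk => sub_nonneg.2 (hα k hk)) fun k _ => one_sub_le_exp_neg _

lemma prod_one_sub_le_of_neg_log_le_sum {ι : Type*} {S : Finset ι} {α : ι → ℝ} {δ : ℝ}
    (hα : ∀ k ∈ S, α k ≤ 1) (hδ : 0 < δ) (h : -log δ ≤ ∑ k ∈ S, α k) :
    ∏ k ∈ S, (1 - α k) ≤ δ :=
  calc ∏ k ∈ S, (1 - α k) ≤ exp (-∑ k ∈ S, α k) := prod_one_sub_le_exp_neg_sum hα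
    _ ≤ exp (log δ) := exp_le_exp.2 (by linarith)
    _ = δ := exp_log hδ

lemma natCast_mul_div_le_of_le {m D : ℕ} {x : ℝ} (hx : 0 ≤ x) (h : m ≤ D) :
    (m : ℝ) * (x / D) ≤ x := by
  rcases Nat.eq_zero_or_pos D with rfl | hD
  · simp [Nat.le_zero.1 h, hx]
  · rw [mul_div_assoc', div_le_iff₀ (by exact_mod_cast hD)]
    rw [mul_comm x]
    exact mul_le_mul_of_nonneg_right (by exact_mod_cast h) hx

lemma le_mul_prod_add_of_le_recursion {α t s : ℕ → ℝ} {c Δ : ℝ} {p : ℕ} (hc : 0 ≤ c)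
    (hΔ : 0 ≤ Δ) (hα : ∀ k, p ≤ k → α k ∈ Set.Icc (0 : ℝ) 1) (ht : ∀ k, p ≤ k → t k ≤ c)
    (hrec : ∀ k, p ≤ k → s (k + 1) ≤ (1 - α k) * s k + α k * t k + Δ) {n : ℕ} (hn : p ≤ n) :
    s n ≤ s p * ∏ k ∈ Ico p n, (1 - α k) + c + (n - p : ℕ) * Δ := by
  induction n, hn using Nat.le_induction with
  | base => simp [hc]
  | succ n hpn ih =>
    obtain ⟨hα0, hα1⟩ := hα n hpn
    rw [prod_Ico_succ_top hpn, Nat.sub_add_comm hpn]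
    push_cast
    have hs := mul_le_mul_of_nonneg_left ih (sub_nonneg.2 hα1)
    have htc := mul_le_mul_of_nonneg_left (ht n hpn) hα0
    have hdrift : 0 ≤ α n * ((n - p : ℕ) * Δ) := by positivity
    nlinarith [hrec n hpn]

section RateOfDivergence

variable {α : ℕ → ℝ} {θ : ℕ → ℕ} (hα : ∀ k, 1 ≤ k → α k ∈ Set.Icc (0 : ℝ) 1)
  (hθ : ∀ n : ℕ, 1 ≤ n → (n : ℝ) ≤ ∑ k ∈ Icc 1 (θ n), α k)
include hα

lemma sum_Ico_one_le (m : ℕ) : ∑ k ∈ Ico 1 m, α k ≤ (m - 1 : ℕ) := by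
  simpa using sum_le_card_nsmul (Ico 1 m) α 1 fun k hk => (hα k (mem_Ico.1 hk).1).2

include hθ

lemma le_rate_of_divergence {n : ℕ} (hn : 1 ≤ n) : n ≤ θ n := by
  have h := (hθ n hn).trans (sum_Ico_one_le hα (θ n + 1))
  exact_mod_cast h

lemma le_sum_Ico_rate_of_divergence {p N : ℕ} (hp : 1 ≤ p) (hN : 1 ≤ N) :
    (N : ℝ) ≤ ∑ k ∈ Ico p (θ (p - 1 + N) + 1), α k := by
  have hθN := le_rate_of_divergence hα hθ (n := p - 1 + N) (by omega)
  have hsum := hθ (p - 1 + N) (by omega)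
  rw [← Ico_add_one_right_eq_Icc, ← sum_Ico_consecutive α hp (by omega)] at hsum
  have hhead := sum_Ico_one_le hα p
  push_cast at hsum hhead
  linarith

end RateOfDivergence

theorem stmt2_general (ε : ℝ) (hε : ε ∈ Set.Ioo (0:ℝ) 2) (g : ℕ → ℕ) (M : ℕ) (hM : 0 < M)
    (α t s : ℕ → ℝ) (θ : ℕ → ℕ) (ψ : ℝ → ℕ)
    (hψpos : ∀ e, 0 < ψ e)
    (hα : ∀ n, 1 ≤ n → α n ∈ Set.Icc (0:ℝ) 1)
    (hθ : ∀ n : ℕ, 1 ≤ n → (n : ℝ) ≤ ∑ k ∈ Finset.Icc 1 (θ n), α k)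
    (ht : ∀ n, ψ (ε/3) ≤ n → t n ≤ ε/3)
    (hs : ∀ n, 1 ≤ n → 0 ≤ s n ∧ s n ≤ M)
    (Θ : ℕ) (hΘ : Θ = θ (ψ (ε/3) - 1 + ⌈Real.log (3 * M / ε)⌉₊) + 1)
    (Δ : ℝ) (hΔ : Δ = ε / (3 * ((Θ - ψ (ε/3) : ℕ) + g ((Θ - ψ (ε/3)) + ψ (ε/3)) : ℕ)))
    (hrec : ∀ n, 1 ≤ n → s (n+1) ≤ (1 - α n) * s n + α n * t n + Δ) :
    ∀ n, Θ ≤ n → n ≤ Θ + g Θ → s n ≤ ε := by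
  intro n hΘn hnΘ
  obtain ⟨hε0, hε2⟩ := hε
  set p := ψ (ε / 3)
  set N := ⌈log (3 * M / ε)⌉₊
  have hp : 1 ≤ p := hψpos _
  have hM1 : (1 : ℝ) ≤ M := by exact_mod_cast hM
  have hN : 1 ≤ N := Nat.ceil_pos.2 (log_pos ((one_lt_div hε0).2 (by linarith)))
  have hpΘ : p < Θ := hΘ ▸ Nat.lt_succ_of_le (by
    have := le_rate_of_divergence hα hθ (n := p - 1 + N) (by omega); omega)
  have hαp : ∀ k, p ≤ k → α k ∈ Set.Icc (0 : ℝ) 1 := fun k hk => hα k (hp.trans hk)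
  have hΔ0 : 0 ≤ Δ := hΔ ▸ by positivity
  have hunroll := le_mul_prod_add_of_le_recursion (by positivity) hΔ0 hαp ht
    (fun k hk => hrec k (hp.trans hk)) (hpΘ.le.trans hΘn)
  have hprod : ∏ k ∈ Ico p n, (1 - α k) ≤ ε / (3 * M) := by
    refine prod_one_sub_le_of_neg_log_le_sum (fun k hk => (hαp k (mem_Ico.1 hk).1).2)
      (by positivity) ?_
    calc -log (ε / (3 * M)) = log (3 * M / ε) := by rw [← log_inv, inv_div]
      _ ≤ N := Nat.le_ceil _
      _ ≤ ∑ k ∈ Ico p Θ, α k := hΘ ▸ le_sum_Ico_rate_of_divergence hα hθ hp hN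
      _ ≤ ∑ k ∈ Ico p n, α k := sum_le_sum_of_subset_of_nonneg (Ico_subset_Ico_right hΘn)
          fun k hk _ => (hαp k (mem_Ico.1 hk).1).1
  have hhead : s p * ∏ k ∈ Ico p n, (1 - α k) ≤ ε / 3 :=
    calc s p * ∏ k ∈ Ico p n, (1 - α k) ≤ M * (ε / (3 * M)) :=
          mul_le_mul (hs p hp).2 hprod
            (prod_nonneg fun k hk => sub_nonneg.2 (hαp k (mem_Ico.1 hk).1).2) (by positivity)
      _ = ε / 3 := by field_simp
  have hdrift : ((n - p : ℕ) : ℝ) * Δ ≤ ε / 3 := by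
    rw [hΔ, ← div_div]
    exact natCast_mul_div_le_of_le (by positivity) (by rw [Nat.sub_add_cancel hpΘ.le]; omega)
  linarith

theorem stmt2 (ε : ℝ) (hε : ε ∈ Set.Ioo (0:ℝ) 2) (g : ℕ → ℕ) (M : ℕ) (hM : 0 < M)
    (α t s : ℕ → ℝ) (θ : ℕ → ℕ) (ψ : ℝ → ℕ)
    (hθpos : ∀ n, 0 < θ n) (hψpos : ∀ e, 0 < ψ e)
    (hα : ∀ n, 1 ≤ n → α n ∈ Set.Icc (0:ℝ) 1)
    (hθ : ∀ n : ℕ, 1 ≤ n → (n : ℝ) ≤ ∑ k ∈ Finset.Icc 1 (θ n), α k)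
    (ht : ∀ n, ψ (ε/3) ≤ n → t n ≤ ε/3)
    (hs : ∀ n, 1 ≤ n → 0 ≤ s n ∧ s n ≤ M)
    (Θ : ℕ) (hΘ : Θ = θ (ψ (ε/3) - 1 + ⌈Real.log (3 * M / ε)⌉₊) + 1)
    (Δ : ℝ) (hΔ : Δ = ε / (3 * ((Θ - ψ (ε/3) : ℕ) + g ((Θ - ψ (ε/3)) + ψ (ε/3)) : ℕ)))
    (hrec : ∀ n, 1 ≤ n → s (n+1) ≤ (1 - α n) * s n + α n * t n + Δ) :
    ∀ n, Θ ≤ n → n ≤ Θ + g Θ → s n ≤ ε :=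
  stmt2_general ε hε g M hM α t s θ ψ hψpos hα hθ ht hs Θ hΘ Δ hΔ hrec
end

section
/- Let ε > 0, g : ℕ → ℕ, M ∈ ℤ₊, D > 0, and θ, ψ : (0,∞) → ℤ₊. Let (α_n) be a sequence in (0,1) such that ∏_{n=1}^∞ (1 − α_n) = 0 with rate of convergence θ (i.e. ∏_{j=1}^n (1−α_j) ≤ δ for all n ≥ θ(δ)). Define Θ = max{θ(Dε/(3M)) + 1, ψ(ε/3)} and Δ = ε / (3·g_ε(Θ − ψ(ε/3))) where g_ε(n) = n + g(n + ψ(ε/3)). Suppose t_n ≤ ε/3 for all n ≥ ψ(ε/3), D ≤ ∏_{n=1}^{ψ(ε/3)−1}(1 − α_n), and (s_n) satisfies 0 ≤ s_n ≤ M and s_{n+1} ≤ (1 − α_n)·s_n + α_n·t_n + Δ for all n ≥ 1. Then s_n ≤ ε for all n ∈ [Θ, Θ + g(Θ)]. -/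
/-!
Unrolling `s (n+1) ≤ (1 - α n) s n + α n t n + Δ` from `m = max (ψ(ε/3)) 1` gives
`s (m+k) ≤ P s m + (ε/3)(1 - P) + kΔ` with `P = ∏_{m ≤ j < m+k} (1 - α j)`.
The product over `[1, m)` is at least `D`, so once the full product drops below `Dε/(3M)`
the tail `P` is at most `ε/(3M)` and `P s m ≤ ε/3`; the choice of `Δ` makes `kΔ ≤ ε/3`
on the whole window.
-/

open Finset

theorem le_prod_mul_add_of_le_one_sub_mul_add {α s t : ℕ → ℝ} {m : ℕ} {c Δ : ℝ}
    (hα : ∀ n, m ≤ n → α n ∈ Set.Icc (0 : ℝ) 1) (ht : ∀ n, m ≤ n → t n ≤ c) (hΔ : 0 ≤ Δ)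
    (hrec : ∀ n, m ≤ n → s (n + 1) ≤ (1 - α n) * s n + α n * t n + Δ) (k : ℕ) :
    s (m + k) ≤ (∏ j ∈ Ico m (m + k), (1 - α j)) * s m
      + c * (1 - ∏ j ∈ Ico m (m + k), (1 - α j)) + k * Δ := by
  induction k with
  | zero => simp
  | succ k ih =>
    obtain ⟨ha0, ha1⟩ := hα (m + k) (by omega)
    rw [← add_assoc, prod_Ico_succ_top (by omega), Nat.cast_succ]
    set P := ∏ j ∈ Ico m (m + k), (1 - α j)
    have hstep := mul_le_mul_of_nonneg_left ih (sub_nonneg.2 ha1)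
    have hkΔ : 0 ≤ α (m + k) * (k * Δ) := mul_nonneg ha0 (mul_nonneg k.cast_nonneg hΔ)
    nlinarith [hrec (m + k) (by omega), mul_le_mul_of_nonneg_left (ht (m + k) (by omega)) ha0]

theorem prod_Icc_one_sub_one_eq_mul_prod_Ico {R : Type*} [CommMonoid R] (f : ℕ → R) {m n : ℕ}
    (hm : 1 ≤ m) (hmn : m ≤ n) :
    ∏ j ∈ Icc 1 (n - 1), f j = (∏ j ∈ Icc 1 (m - 1), f j) * ∏ j ∈ Ico m n, f j := by
  have hIcc : ∀ p, 1 ≤ p → Icc 1 (p - 1) = Ico 1 p := fun p hp => by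
    rw [← Ico_add_one_right_eq_Icc, Nat.sub_add_cancel hp]
  rw [hIcc n (hm.trans hmn), hIcc m hm, prod_Ico_consecutive _ hm hmn]

theorem prod_Ico_le_of_le_prod_Icc {f : ℕ → ℝ} {m n : ℕ} {D δ : ℝ} (hD : 0 < D)
    (hf : ∀ j ∈ Ico m n, 0 ≤ f j) (hm : 1 ≤ m) (hmn : m ≤ n)
    (hhead : D ≤ ∏ j ∈ Icc 1 (m - 1), f j) (hall : ∏ j ∈ Icc 1 (n - 1), f j ≤ D * δ) :
    ∏ j ∈ Ico m n, f j ≤ δ := by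
  rw [prod_Icc_one_sub_one_eq_mul_prod_Ico f hm hmn] at hall
  refine le_of_mul_le_mul_left ?_ hD
  exact (mul_le_mul_of_nonneg_right hhead (prod_nonneg hf)).trans hall

theorem natCast_mul_div_le {a : ℝ} (ha : 0 ≤ a) {k K : ℕ} (hk : k ≤ K) : k * (a / K) ≤ a := by
  rcases K.eq_zero_or_pos with rfl | hK
  · simp [Nat.le_zero.1 hk, ha]
  · rw [mul_div_left_comm]
    exact mul_le_of_le_one_right ha (div_le_one_of_le₀ (by exact_mod_cast hk) K.cast_nonneg)

theorem stmt3_general (ε : ℝ) (hε : 0 < ε) (g : ℕ → ℕ) (M : ℕ) (hM : 0 < M) (D : ℝ) (hD : 0 < D)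
    (α t s : ℕ → ℝ) (θ ψ : ℝ → ℕ)
    (hα : ∀ n, 1 ≤ n → α n ∈ Set.Ioo (0:ℝ) 1)
    (hθ : ∀ δ : ℝ, 0 < δ → ∀ n : ℕ, θ δ ≤ n → ∏ j ∈ Finset.Icc 1 n, (1 - α j) ≤ δ)
    (ht : ∀ n, ψ (ε/3) ≤ n → t n ≤ ε/3)
    (hDle : D ≤ ∏ n ∈ Finset.Icc 1 (ψ (ε/3) - 1), (1 - α n))
    (hs : ∀ n, 1 ≤ n → 0 ≤ s n ∧ s n ≤ M)
    (Θ : ℕ) (hΘ : Θ = max (θ (D * ε / (3 * M)) + 1) (ψ (ε/3)))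
    (Δ : ℝ) (hΔ : Δ = ε / (3 * ((Θ - ψ (ε/3) : ℕ) + g ((Θ - ψ (ε/3)) + ψ (ε/3)) : ℕ)))
    (hrec : ∀ n, 1 ≤ n → s (n+1) ≤ (1 - α n) * s n + α n * t n + Δ) :
    ∀ n, Θ ≤ n → n ≤ Θ + g Θ → s n ≤ ε := by
  intro n hΘn hnΘ
  set m := max (ψ (ε/3)) 1
  have hm : 1 ≤ m := le_max_right _ _
  have hΘm : ψ (ε/3) ≤ Θ ∧ m ≤ Θ ∧ θ (D * ε / (3 * M)) + 1 ≤ Θ := by omega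
  obtain ⟨k, rfl⟩ : ∃ k, n = m + k := ⟨n - m, by omega⟩
  have hα' : ∀ j, m ≤ j → α j ∈ Set.Icc (0 : ℝ) 1 :=
    fun j hj => Set.Ioo_subset_Icc_self (hα j (by omega))
  have hkΔ : k * Δ ≤ ε / 3 := by
    rw [hΔ, Nat.sub_add_cancel hΘm.1, ← div_div]
    exact natCast_mul_div_le (by positivity) (by omega)
  have hunroll := le_prod_mul_add_of_le_one_sub_mul_add hα' (fun j hj => ht j (by omega))
    (hΔ ▸ by positivity) (fun j hj => hrec j (by omega)) k
  set P := ∏ j ∈ Ico m (m + k), (1 - α j)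
  have hfactor : ∀ j ∈ Ico m (m + k), 0 ≤ 1 - α j :=
    fun j hj => sub_nonneg.2 (hα' j (mem_Ico.1 hj).1).2
  have hPle : P ≤ ε / (3 * M) :=
    prod_Ico_le_of_le_prod_Icc hD hfactor hm (by omega)
      (by rwa [show m - 1 = ψ (ε/3) - 1 by omega])
      (by rw [← mul_div_assoc]; exact hθ _ (by positivity) _ (by omega))
  have hsm := hs m hm
  have hPs : P * s m ≤ ε / 3 :=
    calc P * s m ≤ ε / (3 * M) * M := mul_le_mul hPle hsm.2 hsm.1 (by positivity)
      _ = ε / 3 := by field_simp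
  linarith [mul_nonneg hε.le (prod_nonneg hfactor)]

theorem stmt3 (ε : ℝ) (hε : 0 < ε) (g : ℕ → ℕ) (M : ℕ) (hM : 0 < M) (D : ℝ) (hD : 0 < D)
    (α t s : ℕ → ℝ) (θ ψ : ℝ → ℕ)
    (hθpos : ∀ e, 0 < θ e) (hψpos : ∀ e, 0 < ψ e)
    (hα : ∀ n, 1 ≤ n → α n ∈ Set.Ioo (0:ℝ) 1)
    (hθ : ∀ δ : ℝ, 0 < δ → ∀ n : ℕ, θ δ ≤ n → ∏ j ∈ Finset.Icc 1 n, (1 - α j) ≤ δ)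
    (ht : ∀ n, ψ (ε/3) ≤ n → t n ≤ ε/3)
    (hDle : D ≤ ∏ n ∈ Finset.Icc 1 (ψ (ε/3) - 1), (1 - α n))
    (hs : ∀ n, 1 ≤ n → 0 ≤ s n ∧ s n ≤ M)
    (Θ : ℕ) (hΘ : Θ = max (θ (D * ε / (3 * M)) + 1) (ψ (ε/3)))
    (Δ : ℝ) (hΔ : Δ = ε / (3 * ((Θ - ψ (ε/3) : ℕ) + g ((Θ - ψ (ε/3)) + ψ (ε/3)) : ℕ)))
    (hrec : ∀ n, 1 ≤ n → s (n+1) ≤ (1 - α n) * s n + α n * t n + Δ) :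
    ∀ n, Θ ≤ n → n ≤ Θ + g Θ → s n ≤ ε :=
  stmt3_general ε hε g M hM D hD α t s θ ψ hα hθ ht hDle hs Θ hΘ Δ hΔ hrec
end

section
/- Let (λ_n)_{n≥1} be a sequence with λ_n ∈ (0,1) for n ≥ 2, (a_n), (b_n) sequences of nonnegative reals with a_{n+1} ≤ (1 − λ_{n+1})·a_n + b_n for all n ≥ 1, a_n ≤ M for all n with M ∈ ℤ₊, γ a Cauchy modulus of s_n = ∑_{i=1}^n b_i, θ a rate of convergence towards 0 of ∏_{n=1}^∞ (1 − λ_{n+1}), and 0 < D ≤ ∏_{n=1}^{γ(ε/2)}(1 − λ_{n+1}). Then for all ε ∈ (0,2) and all n ≥ θ(Dε/(2M)) + 1, we have a_n ≤ ε. -/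
/-! With `N = γ(ε/2)`, the product up to `N` is at least `D > Dε/(2M)`, so `θ(Dε/(2M)) > N` and
`n > N + 1`. Unrolling the recursion from `N + 1` to `n` gives
`a n ≤ (∏_{N < j < n} (1 - λ_{j+1})) · a_{N+1} + ∑_{N < i < n} b_i`.
The sum is the Cauchy tail `s_{n-1} - s_N ≤ ε/2`. The product is the full product up to `n - 1`,
which is at most `Dε/(2M)` since `n - 1 ≥ θ(Dε/(2M))`, divided by the product up to `N`, which is
at least `D`; so the first term is at most `ε/(2M) · M = ε/2`. -/

open Finset

theorem le_prod_Ico_mul_add_sum_Ico_of_le_mul_add {a b c : ℕ → ℝ} {m : ℕ}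
    (hc : ∀ j, m ≤ j → c j ∈ Set.Icc (0 : ℝ) 1) (hb : ∀ j, m ≤ j → 0 ≤ b j)
    (hrec : ∀ j, m ≤ j → a (j + 1) ≤ c j * a j + b j) {n : ℕ} (hmn : m ≤ n) :
    a n ≤ (∏ j ∈ Ico m n, c j) * a m + ∑ j ∈ Ico m n, b j := by
  induction n, hmn using Nat.le_induction with
  | base => simp
  | succ n hmn ih =>
    have hsum : 0 ≤ ∑ j ∈ Ico m n, b j := sum_nonneg fun j hj => hb j (mem_Ico.mp hj).1
    obtain ⟨hc0, hc1⟩ := hc n hmn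
    rw [prod_Ico_succ_top hmn, sum_Ico_succ_top hmn]
    calc a (n + 1) ≤ c n * ((∏ j ∈ Ico m n, c j) * a m + ∑ j ∈ Ico m n, b j) + b n :=
          (hrec n hmn).trans (by gcongr)
      _ ≤ (∏ j ∈ Ico m n, c j) * c n * a m + (∑ j ∈ Ico m n, b j + b n) := by
          nlinarith [mul_le_mul_of_nonneg_right hc1 hsum]

@[to_additive]
theorem prod_Icc_mul_prod_Ico_eq_prod_Icc_pred {M : Type*} [CommMonoid M] (f : ℕ → M)
    {k N n : ℕ} (hkN : k ≤ N + 1) (hNn : N < n) :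
    (∏ j ∈ Icc k N, f j) * ∏ j ∈ Ico (N + 1) n, f j = ∏ j ∈ Icc k (n - 1), f j := by
  rw [← Ico_add_one_right_eq_Icc, ← Ico_add_one_right_eq_Icc, Nat.sub_add_cancel (by omega),
    prod_Ico_consecutive f hkN hNn]

theorem stmt5_general (lam a b : ℕ → ℝ) (M : ℕ) (hM : 0 < M) (γ θ : ℝ → ℕ)
    (hlam : ∀ n, 2 ≤ n → lam n ∈ Set.Ioo (0:ℝ) 1)
    (hb0 : ∀ n, 1 ≤ n → 0 ≤ b n)
    (haM : ∀ n, 1 ≤ n → a n ≤ M)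
    (hrec : ∀ n, 1 ≤ n → a (n+1) ≤ (1 - lam (n+1)) * a n + b n)
    (hγ : ∀ δ : ℝ, 0 < δ → ∀ n : ℕ,
      (∑ i ∈ Finset.Icc 1 (γ δ + n), b i) - (∑ i ∈ Finset.Icc 1 (γ δ), b i) ≤ δ)
    (hθ : ∀ δ : ℝ, 0 < δ → ∀ n : ℕ, θ δ ≤ n → ∏ j ∈ Finset.Icc 1 n, (1 - lam (j+1)) ≤ δ) :
    ∀ ε : ℝ, ε ∈ Set.Ioo (0:ℝ) 2 → ∀ D : ℝ, 0 < D →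
      D ≤ ∏ n ∈ Finset.Icc 1 (γ (ε/2)), (1 - lam (n+1)) →
      ∀ n, θ (D * ε / (2 * M)) + 1 ≤ n → a n ≤ ε := by
  rintro ε ⟨hε0, hε2⟩ D hD hDle n hn
  set N := γ (ε / 2)
  have hM1 : (1 : ℝ) ≤ M := by exact_mod_cast hM
  have hc : ∀ j, 1 ≤ j → 1 - lam (j + 1) ∈ Set.Icc (0 : ℝ) 1 := fun j hj => by
    obtain ⟨h0, h1⟩ := hlam (j + 1) (by omega)
    constructor <;> linarith
  have hδ : 0 < D * ε / (2 * M) := by positivity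
  have hNθ : N < θ (D * ε / (2 * M)) := by
    by_contra! h
    have hδD : D * ε / (2 * M) < D := by
      rw [div_lt_iff₀ (by positivity)]
      nlinarith
    linarith [hθ _ hδ N h]
  have hunroll := le_prod_Ico_mul_add_sum_Ico_of_le_mul_add (m := N + 1)
    (fun j hj => hc j (by omega)) (fun j hj => hb0 j (by omega))
    (fun j hj => hrec j (by omega)) (n := n) (by omega)
  set P := ∏ j ∈ Ico (N + 1) n, (1 - lam (j + 1))
  have hP0 : 0 ≤ P := prod_nonneg fun j hj => (hc j (by simp at hj; omega)).1
  have hP : P ≤ ε / (2 * M) := by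
    refine le_of_mul_le_mul_left ?_ hD
    calc D * P ≤ (∏ j ∈ Icc 1 N, (1 - lam (j + 1))) * P := by gcongr
      _ = ∏ j ∈ Icc 1 (n - 1), (1 - lam (j + 1)) :=
          prod_Icc_mul_prod_Ico_eq_prod_Icc_pred _ (by omega) (by omega)
      _ ≤ D * (ε / (2 * M)) := by rw [← mul_div_assoc]; exact hθ _ hδ _ (by omega)
  have hS : ∑ i ∈ Ico (N + 1) n, b i ≤ ε / 2 := by
    have h := hγ (ε / 2) (by positivity) (n - 1 - N)
    rw [show N + (n - 1 - N) = n - 1 by omega,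
      ← sum_Icc_add_sum_Ico_eq_sum_Icc_pred _ (by omega : 1 ≤ N + 1) (by omega : N < n)] at h
    linarith
  calc a n ≤ P * M + ε / 2 := hunroll.trans (by gcongr; exact haM _ (by omega))
    _ ≤ ε / (2 * M) * M + ε / 2 := by gcongr
    _ = ε := by field_simp; ring

theorem stmt5 (lam a b : ℕ → ℝ) (M : ℕ) (hM : 0 < M) (γ θ : ℝ → ℕ)
    (hlam : ∀ n, 2 ≤ n → lam n ∈ Set.Ioo (0:ℝ) 1)
    (ha0 : ∀ n, 1 ≤ n → 0 ≤ a n) (hb0 : ∀ n, 1 ≤ n → 0 ≤ b n)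
    (haM : ∀ n, 1 ≤ n → a n ≤ M)
    (hrec : ∀ n, 1 ≤ n → a (n+1) ≤ (1 - lam (n+1)) * a n + b n)
    (hγ : ∀ δ : ℝ, 0 < δ → ∀ n : ℕ,
      (∑ i ∈ Finset.Icc 1 (γ δ + n), b i) - (∑ i ∈ Finset.Icc 1 (γ δ), b i) ≤ δ)
    (hθ : ∀ δ : ℝ, 0 < δ → ∀ n : ℕ, θ δ ≤ n → ∏ j ∈ Finset.Icc 1 n, (1 - lam (j+1)) ≤ δ) :
    ∀ ε : ℝ, ε ∈ Set.Ioo (0:ℝ) 2 → ∀ D : ℝ, 0 < D →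
      D ≤ ∏ n ∈ Finset.Icc 1 (γ (ε/2)), (1 - lam (n+1)) →
      ∀ n, θ (D * ε / (2 * M)) + 1 ≤ n → a n ≤ ε :=
  stmt5_general lam a b M hM γ θ hlam hb0 haM hrec hγ hθ
end

section
/- Let (a_k)_{k≥1} be a bounded sequence of reals, a ∈ ℝ, P : (0,∞) → ℤ₊ such that for all ε > 0 and all n ≥ 1, (1/P(ε))·∑_{i=n}^{n+P(ε)−1} a_i ≤ a + ε. Assume θ : (0,∞) → ℤ₊ is such that a_{k+1} − a_k ≤ δ for all δ > 0 and k ≥ θ(δ). Then for all ε > 0 and all n ≥ θ(ε/(P(ε/2)+1)) + P(ε/2), we have a_n ≤ a + ε. -/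
/-!
Fix `ε`, let `p = P (ε/2)` and `δ = ε / (p + 1)`. Past `θ δ` the sequence grows by at most `δ`
per step, so on the window of length `p` ending at `n` we get `a n ≤ a i + (n - i) δ`.
Averaging over the window, `a n` exceeds the window average by at most `δ (p - 1) / 2 ≤ ε / 2`,
and the window average is at most `A + ε / 2`.
-/

open Finset

theorem le_add_nsmul_of_sub_le {α : Type*} [AddCommGroup α] [PartialOrder α]
    [IsOrderedAddMonoid α] {a : ℕ → α} {δ : α} {t : ℕ}
    (h : ∀ k, t ≤ k → a (k + 1) - a k ≤ δ) {i : ℕ} (hi : t ≤ i) (j : ℕ) :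
    a (i + j) ≤ a i + j • δ := by
  induction j with
  | zero => simp
  | succ j ih =>
    have hstep := h (i + j) (hi.trans (Nat.le_add_right i j))
    rw [← add_assoc, succ_nsmul, ← add_assoc]
    calc a (i + j + 1) ≤ a (i + j) + δ := sub_le_iff_le_add'.mp hstep
      _ ≤ a i + j • δ + δ := add_le_add_left ih δ

theorem sum_range_succ_cast_sub (q : ℕ) :
    ∑ k ∈ range (q + 1), ((q - k : ℕ) : ℝ) = q * (q + 1) / 2 := by
  have hreflect : ∑ k ∈ range (q + 1), (q - k) = ∑ k ∈ range (q + 1), k := by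
    simpa using sum_range_reflect (fun k => k) (q + 1)
  have hgauss := sum_range_id_mul_two (q + 1)
  rw [Nat.add_sub_cancel] at hgauss
  rw [← Nat.cast_sum, hreflect, eq_div_iff two_ne_zero]
  exact_mod_cast hgauss.trans (Nat.mul_comm _ _)

theorem le_windowAverage_add {a : ℕ → ℝ} {δ : ℝ} {t : ℕ}
    (h : ∀ k, t ≤ k → a (k + 1) - a k ≤ δ) {m p : ℕ} (hm : t ≤ m) (hp : 0 < p) :
    a (m + p - 1) ≤ (1 / (p : ℝ)) * ∑ i ∈ Ico m (m + p), a i + ((p : ℝ) - 1) / 2 * δ := by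
  obtain ⟨q, rfl⟩ := Nat.exists_eq_add_of_lt hp
  rw [zero_add, ← add_assoc, Nat.add_sub_cancel, sum_Ico_eq_sum_range,
    show m + q + 1 - m = q + 1 by omega]
  have hterm : ∀ k ∈ range (q + 1), a (m + q) ≤ a (m + k) + ((q - k : ℕ) : ℝ) * δ := by
    intro k hk
    have hkq : k + (q - k) = q := Nat.add_sub_cancel' (Nat.lt_succ_iff.mp (mem_range.mp hk))
    simpa [add_assoc, hkq, nsmul_eq_mul] using
      le_add_nsmul_of_sub_le h (hm.trans (Nat.le_add_right m k)) (q - k)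
  have hsum := sum_le_sum hterm
  rw [sum_const, card_range, nsmul_eq_mul, sum_add_distrib, ← sum_mul,
    sum_range_succ_cast_sub] at hsum
  have hq : (0 : ℝ) < q + 1 := by positivity
  push_cast at hsum ⊢
  rw [one_div, ← div_eq_inv_mul, add_sub_cancel_right, div_add' _ _ _ hq.ne', le_div_iff₀ hq]
  linarith

theorem stmt6_general (a : ℕ → ℝ) (A : ℝ) (P θ : ℝ → ℕ)
    (hPpos : ∀ e, 0 < P e)
    (hP : ∀ ε : ℝ, 0 < ε → ∀ n : ℕ, 1 ≤ n →
      (1 / (P ε : ℝ)) * ∑ i ∈ Finset.Ico n (n + P ε), a i ≤ A + ε)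
    (hθ : ∀ δ : ℝ, 0 < δ → ∀ k : ℕ, θ δ ≤ k → a (k+1) - a k ≤ δ) :
    ∀ ε : ℝ, 0 < ε → ∀ n : ℕ, θ (ε / (P (ε/2) + 1)) + P (ε/2) ≤ n → a n ≤ A + ε := by
  intro ε hε n hn
  set p := P (ε / 2)
  have hp : 0 < p := hPpos _
  have hp' : (0 : ℝ) < p := by exact_mod_cast hp
  have hδ : 0 < ε / (p + 1) := by positivity
  have hwindow := le_windowAverage_add (hθ _ hδ) (m := n + 1 - p) (by omega) hp
  have havg := hP (ε / 2) (by positivity) (n + 1 - p) (by omega)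
  have hdrift : ((p : ℝ) - 1) / 2 * (ε / (p + 1)) ≤ ε / 2 := by
    rw [div_mul_div_comm, div_le_div_iff₀ (by positivity) two_pos]
    nlinarith
  rw [show n + 1 - p + p - 1 = n by omega] at hwindow
  linarith

theorem stmt6 (a : ℕ → ℝ) (A : ℝ) (P θ : ℝ → ℕ)
    (hbdd : ∃ L : ℝ, ∀ k, 1 ≤ k → |a k| ≤ L)
    (hPpos : ∀ e, 0 < P e) (hθpos : ∀ e, 0 < θ e)
    (hP : ∀ ε : ℝ, 0 < ε → ∀ n : ℕ, 1 ≤ n →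
      (1 / (P ε : ℝ)) * ∑ i ∈ Finset.Ico n (n + P ε), a i ≤ A + ε)
    (hθ : ∀ δ : ℝ, 0 < δ → ∀ k : ℕ, θ δ ≤ k → a (k+1) - a k ≤ δ) :
    ∀ ε : ℝ, 0 < ε → ∀ n : ℕ, θ (ε / (P (ε/2) + 1)) + P (ε/2) ≤ n → a n ≤ A + ε :=
  stmt6_general a A P θ hPpos hP hθ
end

section
/- Let C be a bounded convex subset with diameter at most M (M ∈ ℤ₊) of a W-hyperbolic space, T : C → C nonexpansive, and (x_n) the Halpern iteration for u, x ∈ C and (λ_n) in [0,1]. Assume α is a rate of convergence of (λ_n) to 0, β is a Cauchy modulus of s_n = ∑_{i=1}^n |λ_{i+1} − λ_i|, and θ is a rate of divergence of ∑_{n=1}^∞ λ_{n+1}. Then for all ε ∈ (0,2) and all n ≥ θ(β(ε/(4M)) + 1 + ⌈ln(2M/ε)⌉) + 1, d(x_n, x_{n+1}) ≤ ε. -/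
/-! The distances `a n = d(x n, x (n+1))` satisfy
`a (n+1) ≤ (1 - λ (n+2)) a n + M |λ (n+2) - λ (n+1)|`. Unrolling this from `N = β(ε/4M) + 1`
bounds `a n` by `M ∏ (1 - λ (k+1)) + M ∑ |λ (k+1) - λ k|` over `N < k ≤ n`. The sum is at most
`ε/4` by the Cauchy modulus, and the product is at most `exp (-∑ λ (k+1)) ≤ ε/(2M)` since the rate
of divergence makes `∑ λ (k+1)` at least `⌈ln(2M/ε)⌉` there. -/

structure WHyperbolic (X : Type*) [MetricSpace X] where
  W : X → X → ℝ → X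
  W1 : ∀ (x y z : X) (l : ℝ), l ∈ Set.Icc (0:ℝ) 1 →
    dist z (W x y l) ≤ (1 - l) * dist z x + l * dist z y
  W2 : ∀ (x y : X) (l l' : ℝ), l ∈ Set.Icc (0:ℝ) 1 → l' ∈ Set.Icc (0:ℝ) 1 →
    dist (W x y l) (W x y l') = |l - l'| * dist x y
  W3 : ∀ (x y : X) (l : ℝ), l ∈ Set.Icc (0:ℝ) 1 → W x y l = W y x (1 - l)
  W4 : ∀ (x y z w : X) (l : ℝ), l ∈ Set.Icc (0:ℝ) 1 →
    dist (W x z l) (W y w l) ≤ (1 - l) * dist x y + l * dist z w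
open Finset

lemma Finset.sum_Ioc_eq_sum_Icc_one_sub {G : Type*} [AddCommGroup G] (f : ℕ → G) {m n : ℕ}
    (hmn : m ≤ n) : ∑ i ∈ Ioc m n, f i = ∑ i ∈ Icc 1 n, f i - ∑ i ∈ Icc 1 m, f i := by
  rw [eq_sub_iff_add_eq', ← zero_add 1, Icc_add_one_left_eq_Ioc, Icc_add_one_left_eq_Ioc]
  exact sum_Ioc_consecutive f m.zero_le hmn

lemma Finset.sum_Icc_one_le_of_le_one {μ : ℕ → ℝ} (hμ : ∀ i, μ i ≤ 1) (n : ℕ) :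
    ∑ i ∈ Icc 1 n, μ i ≤ n :=
  calc ∑ i ∈ Icc 1 n, μ i ≤ ∑ i ∈ Icc 1 n, (1 : ℝ) := sum_le_sum fun i _ ↦ hμ i
    _ = n := by simp

lemma Finset.sum_Ioc_le_of_sub_le {f : ℕ → ℝ} (hf : ∀ i, 0 ≤ f i) {b : ℕ} {δ : ℝ}
    (hb : ∀ n, ∑ i ∈ Icc 1 (b + n), f i - ∑ i ∈ Icc 1 b, f i ≤ δ) {m n : ℕ} (hbm : b ≤ m) :
    ∑ i ∈ Ioc m n, f i ≤ δ := by
  rcases le_or_gt m n with hmn | hnm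
  · calc ∑ i ∈ Ioc m n, f i ≤ ∑ i ∈ Ioc b n, f i :=
          sum_le_sum_of_subset_of_nonneg (Ioc_subset_Ioc_left hbm) fun i _ _ ↦ hf i
      _ = ∑ i ∈ Icc 1 (b + (n - b)), f i - ∑ i ∈ Icc 1 b, f i := by
          rw [sum_Ioc_eq_sum_Icc_one_sub f (hbm.trans hmn), Nat.add_sub_cancel' (hbm.trans hmn)]
      _ ≤ δ := hb _
  · simpa [Ioc_eq_empty_of_le hnm.le] using hb 0

lemma Finset.le_sum_Ioc_of_add_le_sum_Icc {μ : ℕ → ℝ} (hμ : ∀ i, μ i ≤ 1) {m n : ℕ} {c : ℝ}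
    (hmn : m ≤ n) (h : m + c ≤ ∑ i ∈ Icc 1 n, μ i) : c ≤ ∑ i ∈ Ioc m n, μ i := by
  rw [sum_Ioc_eq_sum_Icc_one_sub μ hmn]
  linarith [sum_Icc_one_le_of_le_one hμ m]

lemma Real.prod_one_sub_le_exp_neg_sum {ι : Type*} (s : Finset ι) {μ : ι → ℝ}
    (hμ : ∀ i ∈ s, μ i ≤ 1) : ∏ i ∈ s, (1 - μ i) ≤ Real.exp (-∑ i ∈ s, μ i) := by
  rw [← sum_neg_distrib, Real.exp_sum]
  exact prod_le_prod (fun i hi ↦ by linarith [hμ i hi])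
    fun i _ ↦ by linarith [Real.add_one_le_exp (-μ i)]

lemma le_mul_prod_add_sum_of_le_one_sub_mul_add {a μ b : ℕ → ℝ}
    (hμ : ∀ k, μ k ∈ Set.Icc (0 : ℝ) 1) (hb : ∀ k, 0 ≤ b k)
    (hrec : ∀ k, a (k + 1) ≤ (1 - μ (k + 1)) * a k + b (k + 1)) {m n : ℕ} (hmn : m ≤ n) :
    a n ≤ a m * ∏ k ∈ Ioc m n, (1 - μ k) + ∑ k ∈ Ioc m n, b k := by
  induction n, hmn using Nat.le_induction with
  | base => simp
  | succ n hmn ih =>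
    rw [prod_Ioc_succ_top hmn, sum_Ioc_succ_top hmn]
    have hS : 0 ≤ ∑ k ∈ Ioc m n, b k := sum_nonneg fun k _ ↦ hb k
    have hμ' := hμ (n + 1)
    calc a (n + 1) ≤ (1 - μ (n + 1)) * a n + b (n + 1) := hrec n
      _ ≤ (1 - μ (n + 1)) * (a m * ∏ k ∈ Ioc m n, (1 - μ k) + ∑ k ∈ Ioc m n, b k)
            + b (n + 1) := by gcongr; linarith [hμ'.2]
      _ ≤ _ := by nlinarith [mul_nonneg hμ'.1 hS]

namespace WHyperbolic

variable {X : Type*} [MetricSpace X] (H : WHyperbolic X)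

lemma dist_W_W_le {l l' : ℝ} (hl : l ∈ Set.Icc (0 : ℝ) 1) (hl' : l' ∈ Set.Icc (0 : ℝ) 1)
    (u y z : X) : dist (H.W u y l) (H.W u z l') ≤ |l - l'| * dist u y + l' * dist y z :=
  calc dist (H.W u y l) (H.W u z l')
        ≤ dist (H.W u y l) (H.W u y l') + dist (H.W u y l') (H.W u z l') := dist_triangle _ _ _
    _ ≤ |l - l'| * dist u y + ((1 - l') * dist u u + l' * dist y z) :=
        add_le_add (H.W2 u y l l' hl hl').le (H.W4 u u y z l' hl')
    _ = |l - l'| * dist u y + l' * dist y z := by rw [dist_self]; ring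

variable {C : Set X} {T : X → X} {u : X} {lam : ℕ → ℝ} {x : ℕ → X}

lemma halpern_mem (hconv : ∀ x ∈ C, ∀ y ∈ C, ∀ l : ℝ, l ∈ Set.Icc (0 : ℝ) 1 → H.W x y l ∈ C)
    (hTC : ∀ x ∈ C, T x ∈ C) (hu : u ∈ C) (hlam : ∀ k, lam (k + 1) ∈ Set.Icc (0 : ℝ) 1)
    (hx0 : x 0 ∈ C) (hiter : ∀ n, x (n + 1) = H.W u (T (x n)) (1 - lam (n + 1))) (k : ℕ) :
    x k ∈ C := by
  induction k with
  | zero => exact hx0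
  | succ k ih => rw [hiter]; exact hconv u hu _ (hTC _ ih) _ (Set.Icc.one_sub_mem (hlam k))

lemma halpern_dist_succ_le {M : ℝ} (hdiam : ∀ a ∈ C, ∀ b ∈ C, dist a b ≤ M)
    (hTC : ∀ x ∈ C, T x ∈ C) (hT : ∀ x ∈ C, ∀ y ∈ C, dist (T x) (T y) ≤ dist x y) (hu : u ∈ C)
    (hlam : ∀ k, lam (k + 1) ∈ Set.Icc (0 : ℝ) 1) (hxC : ∀ k, x k ∈ C)
    (hiter : ∀ n, x (n + 1) = H.W u (T (x n)) (1 - lam (n + 1))) (k : ℕ) :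
    dist (x (k + 1)) (x (k + 2)) ≤
      (1 - lam (k + 2)) * dist (x k) (x (k + 1)) + M * |lam (k + 2) - lam (k + 1)| := by
  calc dist (x (k + 1)) (x (k + 2))
        = dist (H.W u (T (x k)) (1 - lam (k + 1))) (H.W u (T (x (k + 1))) (1 - lam (k + 2))) := by
        congr 1 <;> exact hiter _
    _ ≤ |(1 - lam (k + 1)) - (1 - lam (k + 2))| * dist u (T (x k))
          + (1 - lam (k + 2)) * dist (T (x k)) (T (x (k + 1))) :=
        H.dist_W_W_le (Set.Icc.one_sub_mem (hlam k)) (Set.Icc.one_sub_mem (hlam (k + 1))) _ _ _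
    _ ≤ M * |lam (k + 2) - lam (k + 1)| + (1 - lam (k + 2)) * dist (x k) (x (k + 1)) := by
        rw [sub_sub_sub_cancel_left, mul_comm]
        have hl := (Set.Icc.one_sub_mem (hlam (k + 1))).1
        gcongr
        exacts [hdiam _ hu _ (hTC _ (hxC k)), hT _ (hxC k) _ (hxC (k + 1))]
    _ = _ := add_comm _ _

lemma halpern_dist_le_of_le {M : ℝ} (hdiam : ∀ a ∈ C, ∀ b ∈ C, dist a b ≤ M)
    (hTC : ∀ x ∈ C, T x ∈ C) (hT : ∀ x ∈ C, ∀ y ∈ C, dist (T x) (T y) ≤ dist x y) (hu : u ∈ C)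
    (hlam : ∀ k, lam (k + 1) ∈ Set.Icc (0 : ℝ) 1) (hxC : ∀ k, x k ∈ C)
    (hiter : ∀ n, x (n + 1) = H.W u (T (x n)) (1 - lam (n + 1))) {N n : ℕ} (hNn : N ≤ n) :
    dist (x n) (x (n + 1)) ≤
      M * ∏ k ∈ Ioc N n, (1 - lam (k + 1)) + M * ∑ k ∈ Ioc N n, |lam (k + 1) - lam k| := by
  have hM : 0 ≤ M := dist_self u ▸ hdiam u hu u hu
  calc dist (x n) (x (n + 1))
      ≤ dist (x N) (x (N + 1)) * ∏ k ∈ Ioc N n, (1 - lam (k + 1))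
        + ∑ k ∈ Ioc N n, M * |lam (k + 1) - lam k| :=
        le_mul_prod_add_sum_of_le_one_sub_mul_add (a := fun k ↦ dist (x k) (x (k + 1)))
          (b := fun k ↦ M * |lam (k + 1) - lam k|) hlam (fun k ↦ by positivity)
          (H.halpern_dist_succ_le hdiam hTC hT hu hlam hxC hiter) hNn
    _ ≤ M * ∏ k ∈ Ioc N n, (1 - lam (k + 1)) + M * ∑ k ∈ Ioc N n, |lam (k + 1) - lam k| := by
        rw [mul_sum]
        gcongr ?_ * _ + _
        exacts [prod_nonneg fun k _ ↦ (Set.Icc.one_sub_mem (hlam k)).1,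
          hdiam _ (hxC N) _ (hxC (N + 1))]

end WHyperbolic

theorem stmt12_general {X : Type*} [MetricSpace X] (H : WHyperbolic X) (C : Set X)
    (hconv : ∀ x ∈ C, ∀ y ∈ C, ∀ l : ℝ, l ∈ Set.Icc (0:ℝ) 1 → H.W x y l ∈ C)
    (M : ℕ) (hM : 0 < M) (hdiam : ∀ a ∈ C, ∀ b ∈ C, dist a b ≤ M)
    (T : X → X) (hTC : ∀ x ∈ C, T x ∈ C)
    (hT : ∀ x ∈ C, ∀ y ∈ C, dist (T x) (T y) ≤ dist x y)
    (u x0 : X) (hu : u ∈ C) (hx0 : x0 ∈ C)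
    (lam : ℕ → ℝ) (hlam : ∀ n, 1 ≤ n → lam n ∈ Set.Icc (0:ℝ) 1)
    (x : ℕ → X) (hx : x 0 = x0)
    (hiter : ∀ n : ℕ, x (n+1) = H.W u (T (x n)) (1 - lam (n+1)))
    (β : ℝ → ℕ) (θ : ℕ → ℕ)
    (hβ : ∀ δ : ℝ, 0 < δ → ∀ n : ℕ,
      (∑ i ∈ Finset.Icc 1 (β δ + n), |lam (i+1) - lam i|)
        - (∑ i ∈ Finset.Icc 1 (β δ), |lam (i+1) - lam i|) ≤ δ)
    (hθ : ∀ n : ℕ, 1 ≤ n → (n : ℝ) ≤ ∑ k ∈ Finset.Icc 1 (θ n), lam (k+1)) :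
    ∀ ε : ℝ, ε ∈ Set.Ioo (0:ℝ) 2 →
      ∀ n : ℕ, θ (β (ε / (4 * M)) + 1 + ⌈Real.log (2 * M / ε)⌉₊) + 1 ≤ n →
        dist (x n) (x (n+1)) ≤ ε := by
  rintro ε ⟨hε, -⟩ n hn
  have hMpos : (0 : ℝ) < M := by exact_mod_cast hM
  set δ := ε / (4 * M)
  set N := β δ + 1
  set c := ⌈Real.log (2 * M / ε)⌉₊
  have hlam' : ∀ k, lam (k + 1) ∈ Set.Icc (0 : ℝ) 1 := fun k ↦ hlam _ k.succ_pos
  have hxC := H.halpern_mem hconv hTC hu hlam' (hx ▸ hx0) hiter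
  have hdiv : (N + c : ℝ) ≤ ∑ i ∈ Icc 1 n, lam (i + 1) :=
    (mod_cast hθ (N + c) (by omega) : (N + c : ℝ) ≤ _).trans <|
      sum_le_sum_of_subset_of_nonneg (Icc_subset_Icc_right (by omega)) fun i _ _ ↦ (hlam' i).1
  have hNn : N ≤ n := by
    have : (N + c : ℝ) ≤ n := hdiv.trans (sum_Icc_one_le_of_le_one (fun i ↦ (hlam' i).2) n)
    exact_mod_cast (show (N : ℝ) ≤ n by linarith [c.cast_nonneg (α := ℝ)])
  have hprod : ∏ k ∈ Ioc N n, (1 - lam (k + 1)) ≤ ε / (2 * M) :=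
    calc ∏ k ∈ Ioc N n, (1 - lam (k + 1)) ≤ Real.exp (-∑ k ∈ Ioc N n, lam (k + 1)) :=
          Real.prod_one_sub_le_exp_neg_sum _ fun k _ ↦ (hlam' k).2
      _ ≤ Real.exp (-Real.log (2 * M / ε)) := by
          gcongr
          linarith [Nat.le_ceil (Real.log (2 * M / ε)),
            le_sum_Ioc_of_add_le_sum_Icc (fun i ↦ (hlam' i).2) hNn hdiv]
      _ = ε / (2 * M) := by rw [Real.exp_neg, Real.exp_log (by positivity), inv_div]
  have hsum : ∑ k ∈ Ioc N n, |lam (k + 1) - lam k| ≤ δ :=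
    sum_Ioc_le_of_sub_le (fun i ↦ abs_nonneg _) (hβ δ (by positivity)) (β δ).le_succ
  calc dist (x n) (x (n + 1))
      ≤ M * ∏ k ∈ Ioc N n, (1 - lam (k + 1)) + M * ∑ k ∈ Ioc N n, |lam (k + 1) - lam k| :=
        H.halpern_dist_le_of_le hdiam hTC hT hu hlam' hxC hiter hNn
    _ ≤ M * (ε / (2 * M)) + M * δ := by gcongr
    _ = 3 / 4 * ε := by simp only [δ]; field_simp; ring
    _ ≤ ε := by linarith

theorem stmt12 {X : Type*} [MetricSpace X] (H : WHyperbolic X) (C : Set X)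
    (hconv : ∀ x ∈ C, ∀ y ∈ C, ∀ l : ℝ, l ∈ Set.Icc (0:ℝ) 1 → H.W x y l ∈ C)
    (M : ℕ) (hM : 0 < M) (hdiam : ∀ a ∈ C, ∀ b ∈ C, dist a b ≤ M)
    (T : X → X) (hTC : ∀ x ∈ C, T x ∈ C)
    (hT : ∀ x ∈ C, ∀ y ∈ C, dist (T x) (T y) ≤ dist x y)
    (u x0 : X) (hu : u ∈ C) (hx0 : x0 ∈ C)
    (lam : ℕ → ℝ) (hlam : ∀ n, 1 ≤ n → lam n ∈ Set.Icc (0:ℝ) 1)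
    (x : ℕ → X) (hx : x 0 = x0)
    (hiter : ∀ n : ℕ, x (n+1) = H.W u (T (x n)) (1 - lam (n+1)))
    (α β : ℝ → ℕ) (θ : ℕ → ℕ)
    (hα : ∀ δ : ℝ, 0 < δ → ∀ n, α δ ≤ n → lam n ≤ δ)
    (hβ : ∀ δ : ℝ, 0 < δ → ∀ n : ℕ,
      (∑ i ∈ Finset.Icc 1 (β δ + n), |lam (i+1) - lam i|)
        - (∑ i ∈ Finset.Icc 1 (β δ), |lam (i+1) - lam i|) ≤ δ)
    (hθ : ∀ n : ℕ, 1 ≤ n → (n : ℝ) ≤ ∑ k ∈ Finset.Icc 1 (θ n), lam (k+1)) :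
    ∀ ε : ℝ, ε ∈ Set.Ioo (0:ℝ) 2 →
      ∀ n : ℕ, θ (β (ε / (4 * M)) + 1 + ⌈Real.log (2 * M / ε)⌉₊) + 1 ≤ n →
        dist (x n) (x (n+1)) ≤ ε :=
  stmt12_general H C hconv M hM hdiam T hTC hT u x0 hu hx0 lam hlam x hx hiter β θ hβ hθ
end

section
/- Let X be a CAT(0) space, C ⊆ X bounded convex with diameter at most M, T : C → C nonexpansive, u, x ∈ C, (λ_n) a sequence in [0,1], (x_n) the Halpern iteration x_0 = x, x_{n+1} = λ_{n+1}u ⊕ (1−λ_{n+1})Tx_n, and for t ∈ (0,1) let z_t be the unique point with z_t = tu ⊕ (1−t)Tz_t. Then for all n ≥ 0: d(x_{n+1}, z_t)² ≤ (1−λ_{n+1})·d(x_n, z_t)² + λ_{n+1}·((1−t)·d(u, Tz_t)² − d(x_{n+1}, u)²) + M²·t. -/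
/-- A CAT(0) space, presented as a W-hyperbolic space whose midpoints satisfy the
Bruhat–Tits CN-inequality. -/
structure CAT0 (X : Type*) [MetricSpace X] extends WHyperbolic X where
  CN : ∀ x y z : X,
    dist z (W x y (1/2)) ^ 2 ≤ (1/2) * dist z x ^ 2 + (1/2) * dist z y ^ 2 - (1/4) * dist x y ^ 2

section Helpers
variable {X : Type*} [MetricSpace X] (H : CAT0 X)

lemma W_zero (x y : X) : H.W x y 0 = x := by
  have h := H.W1 x y x 0 (by constructor <;> norm_num)
  simp at h; exact h.symm

lemma W_one (x y : X) : H.W x y 1 = y := by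
  have h := H.W1 x y y 1 (by constructor <;> norm_num)
  simp at h; exact h.symm

lemma Wmid (x y : X) {a b : ℝ} (ha : a ∈ Set.Icc (0:ℝ) 1) (hb : b ∈ Set.Icc (0:ℝ) 1) :
    H.W x y ((a+b)/2) = H.W (H.W x y a) (H.W x y b) (1/2) := by
  obtain ⟨ha0, ha1⟩ := ha
  obtain ⟨hb0, hb1⟩ := hb
  have hm : (a+b)/2 ∈ Set.Icc (0:ℝ) 1 := ⟨by linarith, by linarith⟩
  have h1 := H.W2 x y ((a+b)/2) a hm ⟨ha0, ha1⟩
  have h2 := H.W2 x y ((a+b)/2) b hm ⟨hb0, hb1⟩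
  have h3 := H.W2 x y a b ⟨ha0, ha1⟩ ⟨hb0, hb1⟩
  have hcn := H.CN (H.W x y a) (H.W x y b) (H.W x y ((a+b)/2))
  rw [h1, h2, h3] at hcn
  have key : dist (H.W x y ((a+b)/2)) (H.W (H.W x y a) (H.W x y b) (1/2)) ^ 2 ≤ 0 := by
    have e1 : |(a+b)/2 - a| ^ 2 = ((a+b)/2 - a)^2 := sq_abs _
    have e2 : |(a+b)/2 - b| ^ 2 = ((a+b)/2 - b)^2 := sq_abs _
    have e3 : |a - b| ^ 2 = (a-b)^2 := sq_abs _
    nlinarith [hcn, sq_nonneg (dist x y)]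
  have : dist (H.W x y ((a+b)/2)) (H.W (H.W x y a) (H.W x y b) (1/2)) = 0 :=
    le_antisymm (by nlinarith [dist_nonneg (x := H.W x y ((a+b)/2)) (y := H.W (H.W x y a) (H.W x y b) (1/2))]) dist_nonneg
  exact dist_eq_zero.mp this

/-- convexity inequality for dyadic parameters -/
lemma dyadic (x y z : X) : ∀ n : ℕ, ∀ k : ℕ, k ≤ 2^n →
    dist (H.W x y ((k:ℝ)/2^n)) z ^ 2 ≤
      (1 - (k:ℝ)/2^n) * dist x z ^ 2 + ((k:ℝ)/2^n) * dist y z ^ 2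
        - ((k:ℝ)/2^n) * (1 - (k:ℝ)/2^n) * dist x y ^ 2 := by
  intro n
  induction n with
  | zero =>
    intro k hk
    interval_cases k
    · simp [W_zero]
    · simp [W_one]
  | succ n ih =>
    intro k hk
    rcases Nat.even_or_odd k with ⟨j, hj⟩ | ⟨j, hj⟩
    · have hj2 : j ≤ 2^n := by omega
      have e : (k:ℝ)/2^(n+1) = (j:ℝ)/2^n := by
        rw [hj]; push_cast; ring
      rw [e]; exact ih j hj2
    · -- k = 2j+1, odd case
      have hj2 : j + 1 ≤ 2^n := by
        have : k ≤ 2^(n+1) := hk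
        omega
      set a : ℝ := (j:ℝ)/2^n with hadef
      set b : ℝ := ((j:ℝ)+1)/2^n with hbdef
      have h2n : (0:ℝ) < 2^n := by positivity
      have haI : a ∈ Set.Icc (0:ℝ) 1 := by
        constructor
        · positivity
        · rw [hadef, div_le_one h2n]
          have : (j:ℝ) ≤ 2^n := by exact_mod_cast Nat.le_of_succ_le hj2
          linarith
      have hbI : b ∈ Set.Icc (0:ℝ) 1 := by
        constructor
        · positivity
        · rw [hbdef, div_le_one h2n]
          exact_mod_cast hj2
      have e : (k:ℝ)/2^(n+1) = (a+b)/2 := by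
        rw [hj, hadef, hbdef]; push_cast; ring
      rw [e, Wmid H x y haI hbI]
      have hcn := H.CN (H.W x y a) (H.W x y b) z
      rw [H.W2 x y a b haI hbI] at hcn
      have iha := ih j (Nat.le_of_succ_le hj2)
      have ihb := ih (j+1) hj2
      rw [show ((j:ℝ)+1)/2^n = (((j+1):ℕ):ℝ)/2^n by push_cast; ring] at hbdef
      have iha' : dist (H.W x y a) z ^ 2 ≤ (1-a)*dist x z^2 + a*dist y z^2 - a*(1-a)*dist x y^2 := by
        rw [hadef]; exact iha
      have ihb' : dist (H.W x y b) z ^ 2 ≤ (1-b)*dist x z^2 + b*dist y z^2 - b*(1-b)*dist x y^2 := by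
        rw [hbdef]; exact ihb
      have habs : |a - b| ^ 2 = (a-b)^2 := sq_abs _
      rw [dist_comm]
      nlinarith [hcn, sq_nonneg (dist x y), dist_nonneg (x := z) (y := H.W x y a), dist_nonneg (x := z) (y := H.W x y b), sq_nonneg (dist z (H.W x y a)), sq_nonneg (dist z (H.W x y b)), dist_comm (H.W x y a) z, dist_comm (H.W x y b) z]

lemma convineq (x y z : X) {l : ℝ} (hl : l ∈ Set.Icc (0:ℝ) 1) :
    dist (H.W x y l) z ^ 2 ≤
      (1 - l) * dist x z ^ 2 + l * dist y z ^ 2 - l * (1 - l) * dist x y ^ 2 := by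
  obtain ⟨hl0, hl1⟩ := hl
  set a : ℕ → ℝ := fun n => (⌊l * 2^n⌋₊ : ℝ) / 2^n with hadef
  have h2n : ∀ n : ℕ, (0:ℝ) < 2^n := fun n => by positivity
  have hk : ∀ n : ℕ, ⌊l * 2^n⌋₊ ≤ 2^n := by
    intro n
    have : l * 2^n ≤ ((2^n : ℕ) : ℝ) := by push_cast; nlinarith [h2n n]
    calc ⌊l * 2^n⌋₊ ≤ ⌊((2^n : ℕ) : ℝ)⌋₊ := Nat.floor_le_floor this
    _ = 2^n := Nat.floor_natCast _
  have hup : ∀ n, a n ≤ l := by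
    intro n
    rw [hadef]
    rw [div_le_iff₀ (h2n n)]
    exact Nat.floor_le (by positivity)
  have hlow : ∀ n, l - (1/2)^n ≤ a n := by
    intro n
    have h1 : l * 2^n < ⌊l * 2^n⌋₊ + 1 := Nat.lt_floor_add_one _
    rw [hadef]
    rw [sub_le_iff_le_add, div_add' _ _ _ (ne_of_gt (h2n n))]
    rw [le_div_iff₀ (h2n n)]
    have : ((1:ℝ)/2)^n * 2^n = 1 := by
      rw [← mul_pow]; norm_num
    nlinarith [h1]
  have h0 : Filter.Tendsto (fun n : ℕ => ((1:ℝ)/2)^n) Filter.atTop (nhds 0) := by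
    apply tendsto_pow_atTop_nhds_zero_of_lt_one <;> norm_num
  have ha : Filter.Tendsto a Filter.atTop (nhds l) := by
    have hlo : Filter.Tendsto (fun n : ℕ => l - ((1:ℝ)/2)^n) Filter.atTop (nhds l) := by
      simpa using tendsto_const_nhds.sub h0
    exact tendsto_of_tendsto_of_tendsto_of_le_of_le hlo tendsto_const_nhds hlow hup
  have haI : ∀ n, a n ∈ Set.Icc (0:ℝ) 1 := by
    intro n
    constructor
    · rw [hadef]; positivity
    · rw [hadef, div_le_one (h2n n)]
      exact_mod_cast hk n
  have hdistb : ∀ n, dist (H.W x y l) z - (l - a n) * dist x y ≤ dist (H.W x y (a n)) z ∧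
      dist (H.W x y (a n)) z ≤ dist (H.W x y l) z + (l - a n) * dist x y := by
    intro n
    have hw := H.W2 x y (a n) l (haI n) ⟨hl0, hl1⟩
    have habs : |a n - l| = l - a n := by
      rw [abs_sub_comm, abs_of_nonneg (by linarith [hup n])]
    rw [habs] at hw
    have t1 := abs_dist_sub_le (H.W x y (a n)) (H.W x y l) z
    rw [hw] at t1
    rw [abs_le] at t1
    constructor <;> linarith [t1.1, t1.2]
  have hzero : Filter.Tendsto (fun n => (l - a n) * dist x y) Filter.atTop (nhds 0) := by
    have h1 : Filter.Tendsto (fun n => l - a n) Filter.atTop (nhds (l - l)) :=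
      (tendsto_const_nhds (x := l)).sub ha
    have h2 := h1.mul_const (dist x y)
    simpa using h2
  have hd : Filter.Tendsto (fun n => dist (H.W x y (a n)) z) Filter.atTop
      (nhds (dist (H.W x y l) z)) := by
    have hlo : Filter.Tendsto (fun n => dist (H.W x y l) z - (l - a n) * dist x y)
        Filter.atTop (nhds (dist (H.W x y l) z)) := by
      simpa using tendsto_const_nhds.sub hzero
    have hhi : Filter.Tendsto (fun n => dist (H.W x y l) z + (l - a n) * dist x y)
        Filter.atTop (nhds (dist (H.W x y l) z)) := by
      simpa using tendsto_const_nhds.add hzero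
    exact tendsto_of_tendsto_of_tendsto_of_le_of_le hlo hhi
      (fun n => (hdistb n).1) (fun n => (hdistb n).2)
  have hL : Filter.Tendsto (fun n => dist (H.W x y (a n)) z ^ 2) Filter.atTop
      (nhds (dist (H.W x y l) z ^ 2)) := hd.pow 2
  have hgc : Continuous fun s : ℝ =>
      (1 - s) * dist x z ^ 2 + s * dist y z ^ 2 - s * (1 - s) * dist x y ^ 2 := by
    continuity
  have hR : Filter.Tendsto (fun n =>
      (1 - a n) * dist x z ^ 2 + a n * dist y z ^ 2 - a n * (1 - a n) * dist x y ^ 2)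
      Filter.atTop (nhds ((1 - l) * dist x z ^ 2 + l * dist y z ^ 2
        - l * (1 - l) * dist x y ^ 2)) := (hgc.tendsto l).comp ha
  exact le_of_tendsto_of_tendsto' hL hR (fun n => dyadic H x y z n _ (hk n))
end Helpers

theorem stmt16 {X : Type*} [MetricSpace X] (H : CAT0 X) (C : Set X)
    (hconv : ∀ x ∈ C, ∀ y ∈ C, ∀ l : ℝ, l ∈ Set.Icc (0:ℝ) 1 → H.W x y l ∈ C)
    (M : ℕ) (hM : 0 < M) (hdiam : ∀ a ∈ C, ∀ b ∈ C, dist a b ≤ M)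
    (T : X → X) (hTC : ∀ x ∈ C, T x ∈ C)
    (hT : ∀ x ∈ C, ∀ y ∈ C, dist (T x) (T y) ≤ dist x y)
    (u x0 : X) (hu : u ∈ C) (hx0 : x0 ∈ C)
    (lam : ℕ → ℝ) (hlam : ∀ n, 1 ≤ n → lam n ∈ Set.Icc (0:ℝ) 1)
    (x : ℕ → X) (hx : x 0 = x0)
    (hiter : ∀ n : ℕ, x (n+1) = H.W u (T (x n)) (1 - lam (n+1)))
    (t : ℝ) (ht : t ∈ Set.Ioo (0:ℝ) 1)
    (z : X) (hzC : z ∈ C) (hz : z = H.W u (T z) (1 - t)) :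
    ∀ n : ℕ,
      dist (x (n+1)) z ^ 2 ≤ (1 - lam (n+1)) * dist (x n) z ^ 2
        + lam (n+1) * ((1 - t) * dist u (T z) ^ 2 - dist (x (n+1)) u ^ 2)
        + (M:ℝ)^2 * t := by
  obtain ⟨ht0, ht1⟩ := ht
  have h1t : 1 - t ∈ Set.Icc (0:ℝ) 1 := ⟨by linarith, by linarith⟩
  have hxC : ∀ m, x m ∈ C := by
    intro m
    induction m with
    | zero => rw [hx]; exact hx0
    | succ m ih =>
      rw [hiter m]
      obtain ⟨h1, h2⟩ := hlam (m+1) (by omega)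
      exact hconv u hu _ (hTC _ ih) _ ⟨by linarith, by linarith⟩
  intro n
  obtain ⟨hL0, hL1⟩ := hlam (n+1) (by omega)
  have h1L : 1 - lam (n+1) ∈ Set.Icc (0:ℝ) 1 := ⟨by linarith, by linarith⟩
  have hduz : dist u z = (1 - t) * dist u (T z) := by
    calc dist u z = dist (H.W u (T z) 0) (H.W u (T z) (1-t)) := by
          rw [W_zero H u (T z), ← hz]
    _ = |0 - (1-t)| * dist u (T z) := H.W2 u (T z) 0 (1-t) ⟨le_refl 0, by norm_num⟩ h1t
    _ = (1-t) * dist u (T z) := by rw [zero_sub, abs_neg, abs_of_nonneg h1t.1]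
  have hxu : dist (x (n+1)) u = (1 - lam (n+1)) * dist u (T (x n)) := by
    calc dist (x (n+1)) u
        = dist (H.W u (T (x n)) (1 - lam (n+1))) (H.W u (T (x n)) 0) := by
          rw [W_zero H u (T (x n)), ← hiter n]
    _ = |1 - lam (n+1) - 0| * dist u (T (x n)) :=
          H.W2 u (T (x n)) (1 - lam (n+1)) 0 h1L ⟨le_refl 0, by norm_num⟩
    _ = (1 - lam (n+1)) * dist u (T (x n)) := by rw [sub_zero, abs_of_nonneg h1L.1]
  have E1 := convineq H u (T (x n)) z h1L
  rw [← hiter n, hduz] at E1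
  have E2 := convineq H u (T z) (T (x n)) h1t
  rw [← hz, dist_comm z (T (x n))] at E2
  have hB : dist u (T (x n)) ≤ M := hdiam u hu _ (hTC _ (hxC n))
  have hQ : dist (T z) (T (x n)) ≤ dist (x n) z := by
    rw [← dist_comm z (x n)]
    exact hT z hzC (x n) (hxC n)
  have hB2 : dist u (T (x n)) ^ 2 ≤ (M:ℝ)^2 := by
    nlinarith [dist_nonneg (x := u) (y := T (x n))]
  have hQ2 : dist (T z) (T (x n)) ^ 2 ≤ dist (x n) z ^ 2 := by
    nlinarith [dist_nonneg (x := T z) (y := T (x n))]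
  have step1 : dist (T (x n)) z ^ 2 ≤ t * (M:ℝ)^2 + (1-t) * dist (x n) z ^ 2 := by
    nlinarith [E2, mul_nonneg ht0.le (sub_nonneg.mpr hB2),
      mul_nonneg h1t.1 (sub_nonneg.mpr hQ2),
      mul_nonneg (mul_nonneg h1t.1 ht0.le) (sq_nonneg (dist u (T z)))]
  rw [hxu]
  nlinarith [E1, step1,
    mul_nonneg (mul_nonneg (mul_nonneg hL0 h1t.1) ht0.le) (sq_nonneg (dist u (T z))),
    mul_nonneg (mul_nonneg hL0 ht0.le) (sq_nonneg ((M:ℝ))),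
    mul_nonneg (mul_nonneg h1L.1 ht0.le) (sq_nonneg (dist (x n) z)),
    mul_nonneg (mul_nonneg (mul_nonneg hL0 hL0) h1L.1) (sq_nonneg (dist u (T (x n)))),
    mul_nonneg h1L.1 (sub_nonneg.mpr step1)]
end

section
/- Let X be a complete CAT(0) space, C ⊆ X a closed bounded convex subset, T : C → C nonexpansive, u, x ∈ C, and (λ_n) a sequence in [0,1] satisfying lim λ_n = 0, ∑|λ_{n+1} − λ_n| < ∞, and ∑ λ_n = ∞. Then the Halpern iteration x_0 = x, x_{n+1} = λ_{n+1}u ⊕ (1−λ_{n+1})Tx_n is a Cauchy sequence. -/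
/-!
The Halpern iterates have vanishing steps (Xu's recursive inequality, fed by the summable
variation of `λ`), hence are approximate fixed points of `T`. Along a subsequence realising
`liminf d(u, xₙ)²`, the functional `Φ p = limsup d(y_k, p)²` inherits the CAT(0) inequality; it
therefore attains its minimum on `C` at a point `z`, and minimality along geodesics gives
`Φ z + d(u, z)² ≤ Φ u`. Applied to `u = T z`, which approximate fixed points cannot tell apart
from `z`, this makes `z` a fixed point; applied to the anchor `u` it gives
`d(u, z)² ≤ liminf d(u, xₙ)²`, which is what Xu's inequality needs to show `xₙ → z`.
-/

open Filter Topology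

theorem ContinuousOn.nonpos_of_midpoint_le {h : ℝ → ℝ} (hc : ContinuousOn h (Set.Icc 0 1))
    (h0 : h 0 ≤ 0) (h1 : h 1 ≤ 0)
    (hmid : ∀ a ∈ Set.Icc (0:ℝ) 1, ∀ b ∈ Set.Icc (0:ℝ) 1, h ((a + b) / 2) ≤ (h a + h b) / 2)
    {t : ℝ} (ht : t ∈ Set.Icc (0:ℝ) 1) : h t ≤ 0 := by
  by_contra! hpos
  obtain ⟨m, hm, hmax⟩ := isCompact_Icc.exists_isMaxOn ⟨t, ht⟩ hc
  -- The leftmost maximiser `s` is interior, and the midpoint inequality at `s ± δ` contradicts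
  -- its being leftmost.
  have hbdd : BddBelow (Set.Icc (0:ℝ) 1 ∩ h ⁻¹' {h m}) := ⟨0, fun a ha => ha.1.1⟩
  obtain ⟨hs, hsm⟩ : sInf (Set.Icc (0:ℝ) 1 ∩ h ⁻¹' {h m}) ∈ Set.Icc (0:ℝ) 1 ∩ h ⁻¹' {h m} :=
    (hc.preimage_isClosed_of_isClosed isClosed_Icc isClosed_singleton).csInf_mem ⟨m, hm, rfl⟩ hbdd
  set s := sInf (Set.Icc (0:ℝ) 1 ∩ h ⁻¹' {h m})
  have hsm : h s = h m := hsm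
  have hspos : 0 < h s := hsm ▸ hpos.trans_le (hmax ht)
  have hs0 : 0 < s := lt_of_le_of_ne hs.1 fun h' => by rw [← h'] at hspos; linarith
  have hs1 : s < 1 := lt_of_le_of_ne hs.2 fun h' => by rw [h'] at hspos; linarith
  set δ := min s (1 - s)
  have hδ : 0 < δ := lt_min hs0 (by linarith)
  have hleft : s - δ ∈ Set.Icc (0:ℝ) 1 := ⟨by linarith [min_le_left s (1 - s)], by linarith⟩
  have hright : s + δ ∈ Set.Icc (0:ℝ) 1 := ⟨by linarith, by linarith [min_le_right s (1 - s)]⟩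
  have hlt : h (s - δ) < h m := lt_of_le_of_ne (hmax hleft) fun heq => by
    linarith [csInf_le hbdd ⟨hleft, heq⟩]
  have := hmid _ hleft _ hright
  rw [show (s - δ + (s + δ)) / 2 = s by ring, hsm] at this
  have hr : h (s + δ) ≤ h m := hmax hright
  linarith

theorem tendsto_zero_of_le_one_sub_mul {p t : ℕ → ℝ} (hp : ∀ n, 0 ≤ p n) (ht : ∀ n, 0 ≤ t n)
    (hsum : ¬ Summable t) (hrec : ∀ n, p (n + 1) ≤ (1 - t n) * p n) :
    Tendsto p atTop (𝓝 0) := by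
  have hbound : ∀ n, p n ≤ p 0 * Real.exp (-∑ k ∈ Finset.range n, t k) := by
    intro n
    induction n with
    | zero => simp
    | succ n ih =>
      calc p (n + 1) ≤ (1 - t n) * p n := hrec n
        _ ≤ Real.exp (-t n) * p n := by
          gcongr
          · exact hp n
          · linarith [Real.add_one_le_exp (-t n)]
        _ ≤ Real.exp (-t n) * (p 0 * Real.exp (-∑ k ∈ Finset.range n, t k)) := by gcongr
        _ = p 0 * Real.exp (-∑ k ∈ Finset.range (n + 1), t k) := by
          rw [Finset.sum_range_succ, neg_add, Real.exp_add]; ring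
  have hexp := Real.tendsto_exp_neg_atTop_nhds_zero.comp
    ((not_summable_iff_tendsto_nat_atTop_of_nonneg ht).1 hsum)
  exact squeeze_zero hp hbound (by simpa using hexp.const_mul (p 0))

/-- Xu's lemma. -/
theorem tendsto_zero_of_le_one_sub_mul_add {a b c t : ℕ → ℝ} (ha : ∀ n, 0 ≤ a n)
    (ht : ∀ n, t n ∈ Set.Icc (0:ℝ) 1) (hsum : ¬ Summable t)
    (hb : ∀ ε > 0, ∀ᶠ n in atTop, b n ≤ ε) (hc : ∀ n, 0 ≤ c n) (hcsum : Summable c)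
    (hrec : ∀ n, a (n + 1) ≤ (1 - t n) * a n + t n * b n + c n) :
    Tendsto a atTop (𝓝 0) := by
  refine tendsto_order.2 ⟨fun δ hδ => Eventually.of_forall fun n => hδ.trans_le (ha n),
    fun δ hδ => ?_⟩
  set ε := δ / 3 with hεδ
  have hε : 0 < ε := by positivity
  obtain ⟨N, hN⟩ := eventually_atTop.1
    ((hb ε hε).and ((tendsto_sum_nat_add c).eventually (gt_mem_nhds hε)))
  set S : ℕ → ℝ := fun m => ∑ k ∈ Finset.range m, c (k + N)
  have hS : ∀ m, 0 ≤ S m := fun m => Finset.sum_nonneg fun k _ => hc _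
  -- Past `N`, `a n - ε - ∑_{N ≤ k < n} c k` contracts by the factors `1 - t n`.
  set e : ℕ → ℝ := fun m => max (a (m + N) - ε - S m) 0
  have he : Tendsto e atTop (𝓝 0) := by
    refine tendsto_zero_of_le_one_sub_mul (t := fun m => t (m + N)) (fun m => le_max_right _ _)
      (fun m => (ht _).1) (by rwa [summable_nat_add_iff]) fun m => ?_
    have htm := ht (m + N)
    have hrecm := hrec (m + N)
    have hbm := (hN (m + N) (Nat.le_add_left N m)).1
    have hSm : S (m + 1) = S m + c (m + N) := Finset.sum_range_succ _ _
    rw [show m + N + 1 = m + 1 + N by omega] at hrecm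
    have hcontr : a (m + 1 + N) - ε - S (m + 1) ≤ (1 - t (m + N)) * (a (m + N) - ε - S m) := by
      rw [hSm]
      nlinarith [mul_nonneg htm.1 (hS m), mul_le_mul_of_nonneg_left hbm htm.1]
    have h1t : 0 ≤ 1 - t (m + N) := by linarith [htm.2]
    exact max_le (hcontr.trans (mul_le_mul_of_nonneg_left (le_max_left _ _) h1t))
      (mul_nonneg h1t (le_max_right _ _))
  have hStail : ∀ m, S m ≤ ∑' k, c (k + N) := fun m =>
    ((summable_nat_add_iff N).2 hcsum).sum_le_tsum _ fun k _ => hc _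
  rw [← map_add_atTop_eq_nat N, eventually_map]
  filter_upwards [he.eventually (gt_mem_nhds hε)] with m hm
  have hem : a (m + N) - ε - S m ≤ e m := le_max_left _ _
  linarith [hStail m, (hN N le_rfl).2]

theorem not_summable_succ_of_tendsto_sum_Icc {f : ℕ → ℝ}
    (h : Tendsto (fun N => ∑ k ∈ Finset.Icc 1 N, f k) atTop atTop) :
    ¬ Summable fun n => f (n + 1) := by
  intro hs
  refine not_tendsto_atTop_of_tendsto_nhds hs.hasSum.tendsto_sum_nat (h.congr fun N => ?_)
  rw [← Finset.Ico_add_one_right_eq_Icc, Finset.sum_Ico_eq_sum_range]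
  simp [add_comm]

theorem limsup_le_of_forall_eventually_le {f g h : ℕ → ℝ} {l c : ℝ} (hl : l ∈ Set.Icc (0:ℝ) 1)
    (hf : IsCoboundedUnder (· ≤ ·) atTop f) (hg : IsBoundedUnder (· ≤ ·) atTop g)
    (hh : IsBoundedUnder (· ≤ ·) atTop h)
    (hle : ∀ δ > 0, ∀ᶠ k in atTop, f k ≤ (1 - l) * g k + l * h k + c + δ) :
    limsup f atTop ≤ (1 - l) * limsup g atTop + l * limsup h atTop + c := by
  refine le_of_forall_pos_le_add fun ε hε => limsup_le_of_le hf ?_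
  filter_upwards [hle (ε / 2) (by positivity),
    eventually_lt_of_limsup_lt (lt_add_of_pos_right _ (half_pos hε)) hg,
    eventually_lt_of_limsup_lt (lt_add_of_pos_right _ (half_pos hε)) hh] with k hk hgk hhk
  nlinarith [mul_le_mul_of_nonneg_left hgk.le (sub_nonneg.2 hl.2),
    mul_le_mul_of_nonneg_left hhk.le hl.1]

namespace WHyperbolic

variable {X : Type*} [MetricSpace X] (H : WHyperbolic X)

theorem W_zero (x y : X) : H.W x y 0 = x := by
  simpa [eq_comm] using H.W1 x y x 0 (by norm_num)

theorem W_one (x y : X) : H.W x y 1 = y := by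
  simpa [eq_comm] using H.W1 x y y 1 (by norm_num)

theorem dist_W_right (x y : X) {l : ℝ} (hl : l ∈ Set.Icc (0:ℝ) 1) :
    dist (H.W x y l) y = (1 - l) * dist x y := by
  have h := H.W2 x y l 1 hl (by norm_num)
  rwa [H.W_one, abs_of_nonpos (by linarith [hl.2]), neg_sub] at h

theorem lipschitzOnWith_W (x y : X) : LipschitzOnWith (nndist x y) (H.W x y) (Set.Icc 0 1) :=
  LipschitzOnWith.of_dist_le_mul fun a ha b hb => by
    rw [H.W2 x y a b ha hb, Real.dist_eq, coe_nndist, mul_comm]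

end WHyperbolic

namespace CAT0

variable {X : Type*} [MetricSpace X] (H : CAT0 X)

theorem eq_W_half_of_dist_eq {p q m : X} (hp : dist p m = dist p q / 2)
    (hq : dist q m = dist p q / 2) : m = H.W p q (1/2) := by
  have hCN := H.CN p q m
  rw [dist_comm m p, dist_comm m q, hp, hq] at hCN
  exact dist_eq_zero.1 (pow_eq_zero_iff two_ne_zero |>.1
    (le_antisymm (by linarith) (sq_nonneg _)))

theorem W_W_half (x y : X) {a b : ℝ} (ha : a ∈ Set.Icc (0:ℝ) 1) (hb : b ∈ Set.Icc (0:ℝ) 1) :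
    H.W (H.W x y a) (H.W x y b) (1/2) = H.W x y ((a + b) / 2) := by
  have hab : (a + b) / 2 ∈ Set.Icc (0:ℝ) 1 :=
    ⟨by linarith [ha.1, hb.1], by linarith [ha.2, hb.2]⟩
  refine (H.eq_W_half_of_dist_eq ?_ ?_).symm <;>
    rw [H.W2 x y _ _ ha hb, H.W2 x y _ _ (by assumption) hab]
  · rw [show a - (a + b) / 2 = (a - b) / 2 by ring, abs_div, abs_two]; ring
  · rw [show b - (a + b) / 2 = -((a - b) / 2) by ring, abs_neg, abs_div, abs_two]; ring

theorem dist_W_sq_le (x y z : X) {l : ℝ} (hl : l ∈ Set.Icc (0:ℝ) 1) :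
    dist z (H.W x y l) ^ 2 ≤
      (1 - l) * dist z x ^ 2 + l * dist z y ^ 2 - l * (1 - l) * dist x y ^ 2 := by
  -- `t ↦ dist z (W x y t) ^ 2 + t (1 - t) d(x,y) ^ 2` is midpoint convex by CN, hence convex.
  set g : ℝ → ℝ := fun t => dist z (H.W x y t) ^ 2 + t * (1 - t) * dist x y ^ 2
    - ((1 - t) * dist z x ^ 2 + t * dist z y ^ 2)
  have hW := (H.lipschitzOnWith_W x y).continuousOn
  have hg : ContinuousOn g (Set.Icc 0 1) := by fun_prop
  have hmid : ∀ a ∈ Set.Icc (0:ℝ) 1, ∀ b ∈ Set.Icc (0:ℝ) 1, g ((a + b) / 2) ≤ (g a + g b) / 2 := by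
    intro a ha b hb
    have hCN := H.CN (H.W x y a) (H.W x y b) z
    rw [H.W_W_half x y ha hb, H.W2 x y a b ha hb, mul_pow, sq_abs] at hCN
    simp only [g]
    linear_combination hCN
  have := hg.nonpos_of_midpoint_le (by simp [g, H.W_zero]) (by simp [g, H.W_one]) hmid hl
  simp only [g] at this
  linarith

end CAT0

section LimsupSqDist

variable {X : Type*} [MetricSpace X]

theorem sq_dist_sub_sq_dist_le {a p q : X} {M : ℝ} (hp : dist a p ≤ M) (hq : dist a q ≤ M) :
    dist a p ^ 2 - dist a q ^ 2 ≤ 2 * M * dist p q := by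
  have h := dist_triangle a q p
  rw [dist_comm q p] at h
  nlinarith [mul_nonneg (dist_nonneg (x := p) (y := q))
      (by linarith : 0 ≤ 2 * M - dist a p - dist a q),
    mul_nonneg (by linarith : 0 ≤ dist p q - (dist a p - dist a q))
      (add_nonneg (dist_nonneg (x := a) (y := p)) (dist_nonneg (x := a) (y := q)))]

noncomputable def limsupSqDist (y : ℕ → X) (p : X) : ℝ := limsup (fun k => dist (y k) p ^ 2) atTop

variable {y : ℕ → X} {C : Set X} {M : ℝ}

theorem isBoundedUnder_sq_dist (hy : ∀ k, y k ∈ C) (hM : ∀ p ∈ C, ∀ q ∈ C, dist p q ≤ M)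
    {p : X} (hp : p ∈ C) : IsBoundedUnder (· ≤ ·) atTop fun k => dist (y k) p ^ 2 :=
  isBoundedUnder_of ⟨M ^ 2, fun k => pow_le_pow_left₀ dist_nonneg (hM _ (hy k) p hp) 2⟩

theorem isCoboundedUnder_sq_dist (y : ℕ → X) (p : X) :
    IsCoboundedUnder (· ≤ ·) atTop fun k => dist (y k) p ^ 2 :=
  isCoboundedUnder_le_of_le atTop fun _ => sq_nonneg _

theorem limsupSqDist_nonneg (hy : ∀ k, y k ∈ C) (hM : ∀ p ∈ C, ∀ q ∈ C, dist p q ≤ M)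
    {p : X} (hp : p ∈ C) : 0 ≤ limsupSqDist y p :=
  le_limsup_of_frequently_le (Frequently.of_forall fun _ => sq_nonneg _)
    (isBoundedUnder_sq_dist hy hM hp)

theorem limsupSqDist_le_add (hy : ∀ k, y k ∈ C) (hM : ∀ p ∈ C, ∀ q ∈ C, dist p q ≤ M)
    {p q : X} (hq : q ∈ C) {c : ℝ}
    (h : ∀ δ > 0, ∀ᶠ k in atTop, dist (y k) p ^ 2 ≤ dist (y k) q ^ 2 + c + δ) :
    limsupSqDist y p ≤ limsupSqDist y q + c := by
  have hbdd := isBoundedUnder_sq_dist hy hM hq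
  simpa [limsupSqDist] using limsup_le_of_forall_eventually_le (l := 0) (by norm_num)
    (isCoboundedUnder_sq_dist y p) hbdd hbdd (by simpa using h)

theorem continuousOn_limsupSqDist (hy : ∀ k, y k ∈ C) (hM : ∀ p ∈ C, ∀ q ∈ C, dist p q ≤ M) :
    ContinuousOn (limsupSqDist y) C := by
  have hle : ∀ p ∈ C, ∀ q ∈ C, limsupSqDist y p ≤ limsupSqDist y q + 2 * M * dist p q :=
    fun p hp q hq => limsupSqDist_le_add hy hM hq fun δ hδ => Eventually.of_forall fun k => by
      linarith [sq_dist_sub_sq_dist_le (hM _ (hy k) p hp) (hM _ (hy k) q hq)]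
  refine (LipschitzOnWith.of_dist_le' (K := 2 * M) fun p hp q hq => ?_).continuousOn
  rw [Real.dist_eq, abs_sub_le_iff]
  constructor
  · linarith [hle p hp q hq]
  · rw [dist_comm p q]
    linarith [hle q hq p hp]

theorem CAT0.limsupSqDist_W_le (H : CAT0 X) (hy : ∀ k, y k ∈ C)
    (hM : ∀ p ∈ C, ∀ q ∈ C, dist p q ≤ M) {p q : X} (hp : p ∈ C) (hq : q ∈ C) {l : ℝ}
    (hl : l ∈ Set.Icc (0:ℝ) 1) :
    limsupSqDist y (H.W p q l) ≤
      (1 - l) * limsupSqDist y p + l * limsupSqDist y q - l * (1 - l) * dist p q ^ 2 := by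
  have := limsup_le_of_forall_eventually_le (f := fun k => dist (y k) (H.W p q l) ^ 2)
    (c := -(l * (1 - l) * dist p q ^ 2)) hl
    (isCoboundedUnder_sq_dist y _) (isBoundedUnder_sq_dist hy hM hp)
    (isBoundedUnder_sq_dist hy hM hq) fun δ hδ => Eventually.of_forall fun k => by
      linarith [H.dist_W_sq_le p q (y k) hl]
  unfold limsupSqDist
  linarith

theorem exists_strictMono_limsupSqDist_le_liminf {x : ℕ → X} {u : X}
    (hM : ∀ n, dist u (x n) ≤ M) :
    ∃ φ : ℕ → ℕ, StrictMono φ ∧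
      limsupSqDist (fun k => x (φ k)) u ≤ liminf (fun n => dist u (x n) ^ 2) atTop := by
  set L := liminf (fun n => dist u (x n) ^ 2) atTop
  have hcobdd : IsCoboundedUnder (· ≥ ·) atTop fun n => dist u (x n) ^ 2 :=
    isCoboundedUnder_ge_of_le atTop fun n => pow_le_pow_left₀ dist_nonneg (hM n) 2
  obtain ⟨φ, hφ, hφL⟩ := extraction_forall_of_frequently fun k =>
    frequently_lt_of_liminf_lt hcobdd (lt_add_of_pos_right L (Nat.one_div_pos_of_nat (n := k)))
  refine ⟨φ, hφ, le_of_forall_pos_le_add fun ε hε =>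
    limsup_le_of_le (isCoboundedUnder_sq_dist _ u) ?_⟩
  filter_upwards [tendsto_one_div_add_atTop_nhds_zero_nat.eventually (gt_mem_nhds hε)] with k hk
  rw [dist_comm]
  linarith [hφL k]

end LimsupSqDist

theorem exists_isMinOn_of_midpoint_le {X : Type*} [MetricSpace X] [CompleteSpace X] {C : Set X}
    {Φ : X → ℝ} (mid : X → X → X) (hC : IsClosed C) (hne : C.Nonempty)
    (hmid : ∀ p ∈ C, ∀ q ∈ C, mid p q ∈ C) (hbdd : BddBelow (Φ '' C)) (hcont : ContinuousOn Φ C)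
    (hΦ : ∀ p ∈ C, ∀ q ∈ C, Φ (mid p q) ≤ (Φ p + Φ q) / 2 - dist p q ^ 2 / 4) :
    ∃ z ∈ C, IsMinOn Φ C z := by
  set m := sInf (Φ '' C)
  have hm : ∀ p ∈ C, m ≤ Φ p := fun p hp => csInf_le hbdd ⟨p, hp, rfl⟩
  obtain ⟨v, hv_anti, hv_lim, hv⟩ := exists_seq_tendsto_sInf (hne.image Φ) hbdd
  choose w hwC hwv using hv
  -- A minimising sequence is Cauchy, since `d(p,q)^2 ≤ 2 (Φ p - m) + 2 (Φ q - m)`.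
  have hdist : ∀ i j N, N ≤ i → N ≤ j → dist (w i) (w j) ≤ √(4 * (v N - m)) := by
    intro i j N hi hj
    refine Real.le_sqrt_of_sq_le ?_
    linarith [hΦ _ (hwC i) _ (hwC j), hm _ (hmid _ (hwC i) _ (hwC j)), hv_anti hi, hv_anti hj,
      hwv i, hwv j]
  have hsqrt := ((hv_lim.sub_const m).const_mul 4).sqrt
  rw [sub_self, mul_zero, Real.sqrt_zero] at hsqrt
  have hcauchy : CauchySeq w := cauchySeq_of_le_tendsto_0 _ hdist hsqrt
  obtain ⟨z, hz⟩ := cauchySeq_tendsto_of_complete hcauchy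
  have hzC : z ∈ C := hC.mem_of_tendsto hz (Eventually.of_forall hwC)
  have hΦz : Φ z = m := tendsto_nhds_unique
    ((hcont z hzC).tendsto.comp (tendsto_nhdsWithin_iff.2 ⟨hz, Eventually.of_forall hwC⟩))
    (by simpa [Function.comp_def, hwv] using hv_lim)
  exact ⟨z, hzC, fun p hp => hΦz ▸ hm p hp⟩

namespace CAT0

variable {X : Type*} [MetricSpace X] (H : CAT0 X)

theorem add_sq_dist_le_of_isMinOn {C : Set X} {Φ : X → ℝ}
    (hconv : ∀ x ∈ C, ∀ y ∈ C, ∀ l : ℝ, l ∈ Set.Icc (0:ℝ) 1 → H.W x y l ∈ C)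
    (hΦ : ∀ p ∈ C, ∀ q ∈ C, ∀ l : ℝ, l ∈ Set.Icc (0:ℝ) 1 →
      Φ (H.W p q l) ≤ (1 - l) * Φ p + l * Φ q - l * (1 - l) * dist p q ^ 2)
    {z u : X} (hz : z ∈ C) (hmin : IsMinOn Φ C z) (hu : u ∈ C) :
    Φ z + dist u z ^ 2 ≤ Φ u := by
  have key : ∀ l ∈ Set.Ioo (0:ℝ) 1, Φ z + l * dist u z ^ 2 ≤ Φ u := by
    intro l hl
    have hlI : l ∈ Set.Icc (0:ℝ) 1 := ⟨hl.1.le, hl.2.le⟩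
    have h1 := hΦ u hu z hz l hlI
    have h2 : Φ z ≤ Φ (H.W u z l) := hmin (hconv u hu z hz l hlI)
    have h3 : (1 - l) * (Φ z + l * dist u z ^ 2) ≤ (1 - l) * Φ u := by nlinarith
    exact le_of_mul_le_mul_left h3 (by linarith [hl.2])
  have hlim : Tendsto (fun l => Φ z + l * dist u z ^ 2) (𝓝[<] 1) (𝓝 (Φ z + 1 * dist u z ^ 2)) :=
    tendsto_nhdsWithin_of_tendsto_nhds ((by fun_prop : Continuous _).tendsto 1)
  simpa using le_of_tendsto hlim (Filter.mem_of_superset (Ioo_mem_nhdsLT zero_lt_one) key)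

end CAT0

theorem CAT0.exists_fixedPoint_limsupSqDist_add_le {X : Type*} [MetricSpace X] [CompleteSpace X]
    (H : CAT0 X) {C : Set X} {T : X → X} {y : ℕ → X} {M : ℝ} (hC : IsClosed C)
    (hconv : ∀ x ∈ C, ∀ y ∈ C, ∀ l : ℝ, l ∈ Set.Icc (0:ℝ) 1 → H.W x y l ∈ C)
    (hM : ∀ p ∈ C, ∀ q ∈ C, dist p q ≤ M) (hTC : ∀ x ∈ C, T x ∈ C)
    (hT : ∀ x ∈ C, ∀ y ∈ C, dist (T x) (T y) ≤ dist x y) (hy : ∀ k, y k ∈ C)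
    (hyT : Tendsto (fun k => dist (y k) (T (y k))) atTop (𝓝 0)) :
    ∃ z ∈ C, T z = z ∧ ∀ u ∈ C, limsupSqDist y z + dist u z ^ 2 ≤ limsupSqDist y u := by
  have hΦ : ∀ p ∈ C, ∀ q ∈ C, ∀ l : ℝ, l ∈ Set.Icc (0:ℝ) 1 → limsupSqDist y (H.W p q l) ≤
      (1 - l) * limsupSqDist y p + l * limsupSqDist y q - l * (1 - l) * dist p q ^ 2 :=
    fun p hp q hq l hl => H.limsupSqDist_W_le hy hM hp hq hl
  obtain ⟨z, hzC, hmin⟩ := exists_isMinOn_of_midpoint_le (fun p q => H.W p q (1/2)) hC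
    ⟨y 0, hy 0⟩ (fun p hp q hq => hconv p hp q hq _ (by norm_num))
    ⟨0, by rintro _ ⟨p, hp, rfl⟩; exact limsupSqDist_nonneg hy hM hp⟩
    (continuousOn_limsupSqDist hy hM) fun p hp q hq => by
      linarith [hΦ p hp q hq (1/2) (by norm_num)]
  have hvar : ∀ u ∈ C, limsupSqDist y z + dist u z ^ 2 ≤ limsupSqDist y u :=
    fun u hu => H.add_sq_dist_le_of_isMinOn hconv hΦ hzC hmin hu
  have hTz : limsupSqDist y (T z) ≤ limsupSqDist y z := by
    refine add_zero (limsupSqDist y z) ▸ limsupSqDist_le_add hy hM hzC fun δ hδ => ?_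
    have hsmall := (hyT.const_mul (2 * M)).eventually (gt_mem_nhds (by rwa [mul_zero]))
    filter_upwards [hsmall] with k hk
    have h1 := sq_dist_sub_sq_dist_le (hM _ (hTC z hzC) _ (hy k))
      (hM _ (hTC z hzC) _ (hTC _ (hy k)))
    have h2 : dist (T (y k)) (T z) ^ 2 ≤ dist (y k) z ^ 2 :=
      pow_le_pow_left₀ dist_nonneg (hT _ (hy k) _ hzC) 2
    rw [dist_comm (T z), dist_comm (T z)] at h1
    linarith
  refine ⟨z, hzC, ?_, hvar⟩
  have := hvar (T z) (hTC z hzC)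
  exact dist_eq_zero.1 ((pow_eq_zero_iff two_ne_zero).1 (le_antisymm (by linarith) (sq_nonneg _)))

section Halpern

variable {X : Type*} [MetricSpace X] {C : Set X} {T : X → X} {u : X} {lam : ℕ → ℝ} {x : ℕ → X}
  {M : ℝ}

theorem WHyperbolic.tendsto_dist_succ_halpern (H : WHyperbolic X)
    (hM : ∀ p ∈ C, ∀ q ∈ C, dist p q ≤ M) (hTC : ∀ x ∈ C, T x ∈ C)
    (hT : ∀ x ∈ C, ∀ y ∈ C, dist (T x) (T y) ≤ dist x y) (hu : u ∈ C) (hxC : ∀ n, x n ∈ C)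
    (hlam : ∀ n, lam (n + 1) ∈ Set.Icc (0:ℝ) 1) (hsum : ¬ Summable fun n => lam (n + 2))
    (hvar : Summable fun n => |lam (n + 2) - lam (n + 1)|)
    (hiter : ∀ n, x (n + 1) = H.W u (T (x n)) (1 - lam (n + 1))) :
    Tendsto (fun n => dist (x (n + 1)) (x n)) atTop (𝓝 0) := by
  have hM0 : 0 ≤ M := dist_nonneg.trans (hM u hu u hu)
  have hl : ∀ n, 1 - lam (n + 1) ∈ Set.Icc (0:ℝ) 1 :=
    fun n => Set.Icc.mem_iff_one_sub_mem.1 (hlam n)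
  refine tendsto_zero_of_le_one_sub_mul_add (b := 0) (fun n => dist_nonneg) (fun n => hlam (n + 1))
    hsum (fun ε hε => Eventually.of_forall fun _ => hε.le) (fun n => mul_nonneg hM0 (abs_nonneg _))
    (hvar.mul_left M) fun n => ?_
  have h1 := H.W4 u u (T (x (n + 1))) (T (x n)) _ (hl (n + 1))
  rw [dist_self, mul_zero, zero_add, ← hiter (n + 1)] at h1
  have h2 := H.W2 u (T (x n)) _ _ (hl (n + 1)) (hl n)
  rw [← hiter n, show 1 - lam (n + 1 + 1) - (1 - lam (n + 1)) = -(lam (n + 2) - lam (n + 1)) by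
    ring, abs_neg] at h2
  have h3 := mul_le_mul_of_nonneg_left (hT _ (hxC (n + 1)) _ (hxC n)) (hl (n + 1)).1
  have h4 := mul_le_mul_of_nonneg_left (hM u hu _ (hTC _ (hxC n)))
    (abs_nonneg (lam (n + 2) - lam (n + 1)))
  have h5 := dist_triangle (x (n + 1 + 1)) (H.W u (T (x n)) (1 - lam (n + 1 + 1))) (x (n + 1))
  simp only [Nat.add_assoc, Nat.reduceAdd] at h1 h3 h5 ⊢
  simp only [Pi.zero_apply, mul_zero, add_zero]
  linarith

theorem WHyperbolic.tendsto_dist_self_halpern (H : WHyperbolic X)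
    (hM : ∀ p ∈ C, ∀ q ∈ C, dist p q ≤ M) (hTC : ∀ x ∈ C, T x ∈ C) (hu : u ∈ C)
    (hxC : ∀ n, x n ∈ C) (hlam : ∀ n, lam (n + 1) ∈ Set.Icc (0:ℝ) 1)
    (hlam0 : Tendsto lam atTop (𝓝 0))
    (hstep : Tendsto (fun n => dist (x (n + 1)) (x n)) atTop (𝓝 0))
    (hiter : ∀ n, x (n + 1) = H.W u (T (x n)) (1 - lam (n + 1))) :
    Tendsto (fun n => dist (x n) (T (x n))) atTop (𝓝 0) := by
  have hbound : ∀ n, dist (x n) (T (x n)) ≤ dist (x (n + 1)) (x n) + lam (n + 1) * M := by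
    intro n
    have h1 : dist (x (n + 1)) (T (x n)) = lam (n + 1) * dist u (T (x n)) := by
      rw [hiter n, H.dist_W_right _ _ (Set.Icc.mem_iff_one_sub_mem.1 (hlam n)), sub_sub_cancel]
    have h2 := mul_le_mul_of_nonneg_left (hM u hu _ (hTC _ (hxC n))) (hlam n).1
    linarith [dist_triangle (x n) (x (n + 1)) (T (x n)), dist_comm (x n) (x (n + 1))]
  refine squeeze_zero (fun n => dist_nonneg) hbound ?_
  simpa using hstep.add ((hlam0.comp (tendsto_add_atTop_nat 1)).mul_const M)

theorem CAT0.sq_dist_W_le_of_dist_le (H : CAT0 X) {p q z : X} {l : ℝ}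
    (hl : l ∈ Set.Icc (0:ℝ) 1) (hq : dist q z ≤ dist p z) :
    dist (H.W u q (1 - l)) z ^ 2 ≤
      (1 - l) * dist p z ^ 2 + l * (dist u z ^ 2 - (1 - l) * dist u q ^ 2) := by
  have hl' := Set.Icc.mem_iff_one_sub_mem.1 hl
  have hstar := H.dist_W_sq_le u q z hl'
  rw [sub_sub_cancel, dist_comm z u, dist_comm z q, dist_comm z] at hstar
  nlinarith [mul_le_mul_of_nonneg_left (pow_le_pow_left₀ dist_nonneg hq 2) hl'.1]

theorem CAT0.tendsto_halpern (H : CAT0 X) (hM : ∀ p ∈ C, ∀ q ∈ C, dist p q ≤ M)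
    (hTC : ∀ x ∈ C, T x ∈ C) (hT : ∀ x ∈ C, ∀ y ∈ C, dist (T x) (T y) ≤ dist x y) (hu : u ∈ C)
    (hxC : ∀ n, x n ∈ C) (hlam : ∀ n, lam (n + 1) ∈ Set.Icc (0:ℝ) 1)
    (hsum : ¬ Summable fun n => lam (n + 1)) (hlam0 : Tendsto lam atTop (𝓝 0))
    (hreg : Tendsto (fun n => dist (x n) (T (x n))) atTop (𝓝 0)) {z : X} (hz : z ∈ C)
    (hTz : T z = z) (hzu : dist u z ^ 2 ≤ liminf (fun n => dist u (x n) ^ 2) atTop)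
    (hiter : ∀ n, x (n + 1) = H.W u (T (x n)) (1 - lam (n + 1))) :
    Tendsto x atTop (𝓝 z) := by
  set L := liminf (fun n => dist u (x n) ^ 2) atTop
  have hsq : Tendsto (fun n => dist (x n) z ^ 2) atTop (𝓝 0) := by
    refine tendsto_zero_of_le_one_sub_mul_add (c := 0)
      (b := fun n => dist u z ^ 2 - (1 - lam (n + 1)) * dist u (T (x n)) ^ 2)
      (fun n => sq_nonneg _) hlam hsum (fun ε hε => ?_) (fun _ => le_rfl) summable_zero
      fun n => ?_
    · have hD : ∀ᶠ n in atTop, L - ε / 2 < dist u (x n) ^ 2 :=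
        eventually_lt_of_lt_liminf (by linarith) (isBoundedUnder_of ⟨0, fun n => sq_nonneg _⟩)
      have herr : Tendsto (fun n => 2 * M * dist (x n) (T (x n)) + lam (n + 1) * M ^ 2) atTop
          (𝓝 0) := by
        simpa using (hreg.const_mul (2 * M)).add
          ((hlam0.comp (tendsto_add_atTop_nat 1)).mul_const (M ^ 2))
      filter_upwards [hD, herr.eventually (gt_mem_nhds (half_pos hε))] with n hDn herrn
      have h1 := sq_dist_sub_sq_dist_le (hM u hu _ (hxC n)) (hM u hu _ (hTC _ (hxC n)))
      have h2 := mul_le_mul_of_nonneg_left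
        (pow_le_pow_left₀ dist_nonneg (hM u hu _ (hTC _ (hxC n))) 2) (hlam n).1
      have h3 : (1 - lam (n + 1)) * dist u (T (x n)) ^ 2
          = dist u (T (x n)) ^ 2 - lam (n + 1) * dist u (T (x n)) ^ 2 := by ring
      linarith
    · rw [hiter n]
      simpa using H.sq_dist_W_le_of_dist_le (hlam n) (by simpa only [hTz] using hT _ (hxC n) z hz)
  have hd := (Real.continuous_sqrt.tendsto 0).comp hsq
  simp only [Function.comp_def, Real.sqrt_sq dist_nonneg, Real.sqrt_zero] at hd
  exact tendsto_iff_dist_tendsto_zero.2 hd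

end Halpern

theorem stmt18 {X : Type*} [MetricSpace X] [CompleteSpace X] (H : CAT0 X) (C : Set X)
    (hC : IsClosed C) (hconv : ∀ x ∈ C, ∀ y ∈ C, ∀ l : ℝ, l ∈ Set.Icc (0:ℝ) 1 → H.W x y l ∈ C)
    (hbdd : Bornology.IsBounded C)
    (T : X → X) (hTC : ∀ x ∈ C, T x ∈ C)
    (hT : ∀ x ∈ C, ∀ y ∈ C, dist (T x) (T y) ≤ dist x y)
    (u x0 : X) (hu : u ∈ C) (hx0 : x0 ∈ C)
    (lam : ℕ → ℝ) (hlam : ∀ n, 1 ≤ n → lam n ∈ Set.Icc (0:ℝ) 1)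
    (hC1 : Filter.Tendsto lam Filter.atTop (nhds 0))
    (hC2 : Summable (fun n : ℕ => |lam (n+2) - lam (n+1)|))
    (hC3 : Filter.Tendsto (fun N => ∑ k ∈ Finset.Icc 1 N, lam k) Filter.atTop Filter.atTop)
    (x : ℕ → X) (hx : x 0 = x0)
    (hiter : ∀ n : ℕ, x (n+1) = H.W u (T (x n)) (1 - lam (n+1))) :
    CauchySeq x := by
  obtain ⟨M, hM⟩ := Metric.isBounded_iff.1 hbdd
  replace hM : ∀ p ∈ C, ∀ q ∈ C, dist p q ≤ M := fun p hp q hq => hM hp hq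
  have hlam' : ∀ n, lam (n + 1) ∈ Set.Icc (0:ℝ) 1 := fun n => hlam (n + 1) n.succ_pos
  have hxC : ∀ n, x n ∈ C := by
    intro n
    induction n with
    | zero => exact hx ▸ hx0
    | succ n ih =>
      rw [hiter n]
      exact hconv u hu _ (hTC _ ih) _ (Set.Icc.mem_iff_one_sub_mem.1 (hlam' n))
  have hsum := not_summable_succ_of_tendsto_sum_Icc hC3
  have hstep := H.tendsto_dist_succ_halpern hM hTC hT hu hxC hlam'
    ((summable_nat_add_iff 1).not.2 hsum) hC2 hiter
  have hreg := H.tendsto_dist_self_halpern hM hTC hu hxC hlam' hC1 hstep hiter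
  obtain ⟨φ, hφ, hφu⟩ := exists_strictMono_limsupSqDist_le_liminf fun n => hM u hu _ (hxC n)
  obtain ⟨z, hzC, hTz, hz⟩ := H.exists_fixedPoint_limsupSqDist_add_le hC hconv hM hTC hT
    (fun k => hxC (φ k)) (hreg.comp hφ.tendsto_atTop)
  have hzu : dist u z ^ 2 ≤ liminf (fun n => dist u (x n) ^ 2) atTop := by
    linarith [hz u hu, limsupSqDist_nonneg (fun k => hxC (φ k)) hM hzC]
  exact (H.tendsto_halpern hM hTC hT hu hxC hlam' hsum hC1 hreg hzC hTz hzu hiter).cauchySeq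
end
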